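/- arXiv:1902.02257 — 7 statements merged into one kernel-verified Lean document; each statement's English description precedes it below -/
import Mathlib

section
/- Let r : [0,1] → ℝ be continuous and suppose the right derivative r'₊(z) = lim_{ε↓0} (r(z+ε) − r(z))/ε exists for every z ∈ [0,1). Then for all s,t ∈ [0,1] with s < t there exists z ∈ [s,t) such that r'₊(z) ≥ (r(t) − r(s))/(t − s). -/
/-!
Subtracting the secant line reduces the claim to the case `r s = r t`. If the right derivative
were negative on all of `[s, t)`, the function would drop strictly below its value at `s` just
to the right of `s`, and the fencing inequality (a nonpositive right derivative forbids any
increase) would keep it there up to `t`, contradicting `r s = r t`.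
-/

open Filter Topology Set

theorem hasDerivWithinAt_Ici_of_tendsto_forward_slope {f : ℝ → ℝ} {f' x : ℝ}
    (h : Tendsto (fun ε => (f (x + ε) - f x) / ε) (𝓝[>] 0) (𝓝 f')) :
    HasDerivWithinAt f f' (Ici x) x := by
  rw [← hasDerivWithinAt_Ioi_iff_Ici, hasDerivWithinAt_iff_tendsto_slope' self_notMem_Ioi,
    ← add_zero x, ← map_add_left_nhdsGT, tendsto_map'_iff]
  simpa [Function.comp_def, slope_def_field] using h

theorem exists_lt_of_hasDerivWithinAt_Ici_neg {f : ℝ → ℝ} {f' a b : ℝ} (hab : a < b)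
    (hf : HasDerivWithinAt f f' (Ici a) a) (hf' : f' < 0) : ∃ z ∈ Ioo a b, f z < f a := by
  obtain ⟨z, hz, hzab⟩ :=
    ((hf.liminf_right_slope_le hf').and_eventually (Ioo_mem_nhdsGT hab)).exists
  rw [slope_def_field, div_lt_iff₀ (sub_pos.2 hzab.1), zero_mul, sub_neg] at hz
  exact ⟨z, hzab, hz⟩

theorem image_lt_of_deriv_right_neg {f f' : ℝ → ℝ} {a b : ℝ} (hab : a < b)
    (hf : ContinuousOn f (Icc a b)) (hf' : ∀ x ∈ Ico a b, HasDerivWithinAt f (f' x) (Ici x) x)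
    (hneg : ∀ x ∈ Ico a b, f' x < 0) : f b < f a := by
  obtain ⟨z, hz, hfz⟩ := exists_lt_of_hasDerivWithinAt_Ici_neg hab (hf' a ⟨le_rfl, hab⟩)
    (hneg a ⟨le_rfl, hab⟩)
  have hIcc : Icc z b ⊆ Icc a b := Icc_subset_Icc_left hz.1.le
  have hIco : Ico z b ⊆ Ico a b := Ico_subset_Ico_left hz.1.le
  have hbz : f b ≤ f z :=
    image_le_of_deriv_right_le_deriv_boundary (B := fun _ => f z) (B' := 0) (hf.mono hIcc)
      (fun x hx => hf' x (hIco hx)) le_rfl continuousOn_const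
      (fun x _ => hasDerivWithinAt_const x _ (f z))
      (fun x hx => (hneg x (hIco hx)).le) ⟨hz.2.le, le_rfl⟩
  exact hbz.trans_lt hfz

theorem exists_slope_le_deriv_right {f f' : ℝ → ℝ} {a b : ℝ} (hab : a < b)
    (hf : ContinuousOn f (Icc a b)) (hf' : ∀ x ∈ Ico a b, HasDerivWithinAt f (f' x) (Ici x) x) :
    ∃ z ∈ Ico a b, slope f a b ≤ f' z := by
  by_contra! h
  set C := slope f a b
  have hg : ContinuousOn (fun x => f x - C * x) (Icc a b) := by fun_prop
  have hg' : ∀ x ∈ Ico a b, HasDerivWithinAt (fun x => f x - C * x) (f' x - C) (Ici x) x :=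
    fun x hx => by
      have := (hf' x hx).sub ((hasDerivWithinAt_id x _).const_mul C)
      rwa [mul_one] at this
  have hlt := image_lt_of_deriv_right_neg hab hg hg' fun x hx => sub_neg.2 (h x hx)
  have hC : C * (b - a) = f b - f a := by
    simp only [C, slope_def_field]; field_simp [sub_pos.2 hab |>.ne']
  linarith

/-- a one-sided mean value inequality.  If `r` is continuous on `[0,1]` and its
right derivative `r'` (the limit of forward difference quotients) exists at every point of
`[0,1)`, then for `s < t` in `[0,1]` there is `z ∈ [s,t)` with `r'(z) ≥ (r t - r s)/(t - s)`. -/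
theorem stmt2 (r : ℝ → ℝ) (hr : ContinuousOn r (Set.Icc 0 1)) (r' : ℝ → ℝ)
    (hd : ∀ z ∈ Set.Ico (0 : ℝ) 1,
      Tendsto (fun ε => (r (z + ε) - r z) / ε) (𝓝[>] 0) (𝓝 (r' z))) :
    ∀ s ∈ Set.Icc (0 : ℝ) 1, ∀ t ∈ Set.Icc (0 : ℝ) 1, s < t →
      ∃ z ∈ Set.Ico s t, (r t - r s) / (t - s) ≤ r' z := by
  intro s hs t ht hst
  obtain ⟨z, hz, hle⟩ := exists_slope_le_deriv_right hst (hr.mono (Icc_subset_Icc hs.1 ht.2))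
    fun x hx => hasDerivWithinAt_Ici_of_tendsto_forward_slope (hd x (Ico_subset_Ico hs.1 ht.2 hx))
  rw [slope_def_field] at hle
  exact ⟨z, hz, hle⟩
end

section
/- Let h, g : ℝ^d → ℝ ∪ {∞} be proper closed convex functions, Q ⊆ dom h ∩ dom g a convex set, and L ≥ 0. Then the function d_L defined by d_L(x) = L·g(x) − h(x) for x ∈ Q and ∞ otherwise is convex if and only if for all x, y ∈ Q the generalized Bregman divergences satisfy D_h(x,y) ≤ L·D_g(x,y), where D_h(x,y) = h(x) − h(y) − h'(y; x−y) and h'(y; v) is the one-sided directional derivative. -/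
open Filter Topology RealInnerProductSpace Classical

noncomputable section

abbrev E (d : ℕ) := EuclideanSpace ℝ (Fin d)

def IsProperClosedConvexOn {d : ℕ} (f : E d → ℝ) (S : Set (E d)) : Prop :=
  S.Nonempty ∧ ConvexOn ℝ S f ∧
  IsClosed {p : E d × ℝ | p.1 ∈ S ∧ f p.1 ≤ p.2}

/-- The extension of `h : S → ℝ` by `⊤` outside the domain `S`. -/
def ext {d : ℕ} (h : E d → ℝ) (S : Set (E d)) : E d → EReal :=
  fun x => if x ∈ S then ((h x : EReal)) else ⊤

/-- `h' y v` is the one-sided directional derivative (with values in `EReal`) of the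
extended function at `y` in direction `v`, i.e. the limit as `ε ↓ 0` of
`(h(y + ε v) - h(y))/ε`. -/
def IsOneSidedDirDeriv {d : ℕ} (h : E d → ℝ) (S : Set (E d)) (h' : E d → E d → EReal)
    (Q : Set (E d)) : Prop :=
  ∀ y ∈ Q, ∀ v : E d,
    Tendsto (fun ε : ℝ => (ext h S (y + ε • v) - ((h y : EReal))) * ((ε⁻¹ : ℝ) : EReal))
      (𝓝[>] 0) (𝓝 (h' y v))

section Helpers

open Set

variable {d : ℕ}

lemma comb_mem {Q : Set (E d)} (hQ : Convex ℝ Q) {x y : E d} (hx : x ∈ Q) (hy : y ∈ Q)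
    {t : ℝ} (ht : t ∈ Icc (0:ℝ) 1) : y + t • (x - y) ∈ Q := by
  have h := hQ hy hx (by linarith [ht.2] : (0:ℝ) ≤ 1 - t) ht.1 (by ring)
  have e : (1 - t) • y + t • x = y + t • (x - y) := by module
  rwa [e] at h

lemma mem_aux {t w ε : ℝ} (ht : t ∈ Icc (0:ℝ) 1) (hw : w ∈ Icc (0:ℝ) 1)
    (h0 : 0 ≤ ε) (h1 : ε ≤ 1) : t + ε * (w - t) ∈ Icc (0:ℝ) 1 := by
  have e : t + ε * (w - t) = (1 - ε) * t + ε * w := by ring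
  constructor
  · rw [e]
    have := mul_nonneg (show (0:ℝ) ≤ 1 - ε by linarith) ht.1
    have := mul_nonneg h0 hw.1
    linarith
  · rw [e]
    have h2 := mul_le_mul_of_nonneg_left ht.2 (show (0:ℝ) ≤ 1 - ε by linarith)
    have h3 := mul_le_mul_of_nonneg_left hw.2 h0
    linarith

lemma psi_convexOn {Sf : Set (E d)} {f : E d → ℝ} (hf : ConvexOn ℝ Sf f)
    {Q : Set (E d)} (hQ : Convex ℝ Q) (hQs : Q ⊆ Sf) {x y : E d} (hx : x ∈ Q) (hy : y ∈ Q) :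
    ConvexOn ℝ (Icc (0:ℝ) 1) (fun t : ℝ => f (y + t • (x - y))) := by
  refine ⟨convex_Icc 0 1, fun a ha b hb p q hp hq hpq => ?_⟩
  have h1 := hf.2 (hQs (comb_mem hQ hx hy ha)) (hQs (comb_mem hQ hx hy hb)) hp hq hpq
  have e : p • (y + a • (x - y)) + q • (y + b • (x - y)) = y + (p • a + q • b) • (x - y) := by
    have hq' : q = 1 - p := by linarith
    subst hq'
    simp only [smul_eq_mul]
    module
  rw [e] at h1
  exact h1

lemma psi_mid {ψ : ℝ → ℝ} (hψ : ConvexOn ℝ (Icc (0:ℝ) 1) ψ) {a m b : ℝ}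
    (ha : a ∈ Icc (0:ℝ) 1) (hb : b ∈ Icc (0:ℝ) 1) (h1 : a < m) (h2 : m < b) :
    (b - a) * ψ m ≤ (b - m) * ψ a + (m - a) * ψ b :=
  hψ.secant_mono_aux1 ha hb h1 h2

lemma qf_mono {ψ : ℝ → ℝ} (hψ : ConvexOn ℝ (Icc (0:ℝ) 1) ψ) {t w ε ε' : ℝ}
    (ht : t ∈ Icc (0:ℝ) 1) (hw : w ∈ Icc (0:ℝ) 1)
    (hε : 0 < ε) (hee : ε ≤ ε') (he1 : ε' ≤ 1) :
    (ψ (t + ε * (w - t)) - ψ t) * ε⁻¹ ≤ (ψ (t + ε' * (w - t)) - ψ t) * ε'⁻¹ := by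
  have hε' : 0 < ε' := lt_of_lt_of_le hε hee
  rcases eq_or_lt_of_le hee with rfl | hlt
  · exact le_of_eq rfl
  rcases lt_trichotomy t w with htw | rfl | htw
  · have h1 : t < t + ε * (w - t) := by nlinarith
    have h2 : t + ε * (w - t) < t + ε' * (w - t) := by nlinarith
    have hm := psi_mid hψ ht (mem_aux ht hw hε'.le he1) h1 h2
    rw [← div_eq_mul_inv, ← div_eq_mul_inv, div_le_div_iff₀ hε hε']
    nlinarith [hm, sub_pos.2 htw]
  · simp
  · have h1 : t + ε' * (w - t) < t + ε * (w - t) := by nlinarith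
    have h2 : t + ε * (w - t) < t := by nlinarith
    have hm := psi_mid hψ (mem_aux ht hw hε'.le he1) ht h1 h2
    rw [← div_eq_mul_inv, ← div_eq_mul_inv, div_le_div_iff₀ hε hε']
    nlinarith [hm, sub_pos.2 htw]

lemma ev_X_lb {ψ : ℝ → ℝ} (hψ : ConvexOn ℝ (Icc (0:ℝ) 1) ψ) {t r ε : ℝ}
    (ht : t ∈ Ioo (0:ℝ) 1) (hr0 : 0 ≤ r) (hrt : r < t) (hε : 0 < ε) (he1 : ε ≤ 1) :
    ((1 - t) * (ψ t - ψ r)) / (t - r) ≤ (ψ (t + ε * (1 - t)) - ψ t) * ε⁻¹ := by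
  have hb : t < t + ε * (1 - t) := by nlinarith [ht.2]
  have hbI : t + ε * (1 - t) ∈ Icc (0:ℝ) 1 :=
    mem_aux (Ioo_subset_Icc_self ht) (right_mem_Icc.2 zero_le_one) hε.le he1
  have hm := psi_mid hψ ⟨hr0, by linarith [ht.2]⟩ hbI hrt hb
  rw [← div_eq_mul_inv, div_le_div_iff₀ (by linarith : (0:ℝ) < t - r) hε]
  linarith [hm]

lemma ev_X_ub {ψ : ℝ → ℝ} (hψ : ConvexOn ℝ (Icc (0:ℝ) 1) ψ) {t σ ε : ℝ}
    (ht : t ∈ Ioo (0:ℝ) 1) (hσ : t < σ) (hσ1 : σ ≤ 1) (hε : 0 < ε)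
    (hsm : ε * (1 - t) < σ - t) :
    (ψ (t + ε * (1 - t)) - ψ t) * ε⁻¹ ≤ ((1 - t) * (ψ σ - ψ t)) / (σ - t) := by
  have hb1 : t < t + ε * (1 - t) := by nlinarith [ht.2]
  have hb2 : t + ε * (1 - t) < σ := by linarith
  have hm := psi_mid hψ (Ioo_subset_Icc_self ht) ⟨by linarith [ht.1], hσ1⟩ hb1 hb2
  rw [← div_eq_mul_inv, div_le_div_iff₀ hε (by linarith : (0:ℝ) < σ - t)]
  linarith [hm]

lemma ev_Y_lb {ψ : ℝ → ℝ} (hψ : ConvexOn ℝ (Icc (0:ℝ) 1) ψ) {t σ ε : ℝ}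
    (ht : t ∈ Ioo (0:ℝ) 1) (hσ : t < σ) (hσ1 : σ ≤ 1) (hε : 0 < ε) (he1 : ε ≤ 1) :
    (t * (ψ t - ψ σ)) / (σ - t) ≤ (ψ (t + ε * (0 - t)) - ψ t) * ε⁻¹ := by
  have hb : t + ε * (0 - t) < t := by nlinarith [ht.1]
  have hb0 : 0 ≤ t + ε * (0 - t) := by nlinarith [ht.1]
  have hm := psi_mid hψ ⟨hb0, by linarith [ht.2]⟩ ⟨by linarith [ht.1], hσ1⟩ hb hσ
  rw [← div_eq_mul_inv, div_le_div_iff₀ (by linarith : (0:ℝ) < σ - t) hε]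
  linarith [hm]

lemma ev_Y_ub {ψ : ℝ → ℝ} (hψ : ConvexOn ℝ (Icc (0:ℝ) 1) ψ) {t r ε : ℝ}
    (ht : t ∈ Ioo (0:ℝ) 1) (hr0 : 0 ≤ r) (hrt : r < t) (hε : 0 < ε)
    (hsm : ε * t < t - r) :
    (ψ (t + ε * (0 - t)) - ψ t) * ε⁻¹ ≤ (t * (ψ r - ψ t)) / (t - r) := by
  have hb1 : r < t + ε * (0 - t) := by nlinarith
  have hb2 : t + ε * (0 - t) < t := by nlinarith [ht.1]
  have hm := psi_mid hψ ⟨hr0, by linarith [ht.2]⟩ (Ioo_subset_Icc_self ht) hb1 hb2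
  rw [← div_eq_mul_inv, div_le_div_iff₀ hε (by linarith : (0:ℝ) < t - r)]
  linarith [hm]

lemma jensen_combo {ψ : ℝ → ℝ} (hψ : ConvexOn ℝ (Icc (0:ℝ) 1) ψ) {t ε : ℝ}
    (ht : t ∈ Ioo (0:ℝ) 1) (hε : 0 < ε) (he1 : ε ≤ 1) :
    0 ≤ t * ((ψ (t + ε * (1 - t)) - ψ t) * ε⁻¹)
      + (1 - t) * ((ψ (t + ε * (0 - t)) - ψ t) * ε⁻¹) := by
  have htI := Ioo_subset_Icc_self ht
  have h1 := hψ.2 (mem_aux htI (right_mem_Icc.2 zero_le_one) hε.le he1)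
      (mem_aux htI (left_mem_Icc.2 zero_le_one) hε.le he1) ht.1.le
      (by linarith [ht.2] : (0:ℝ) ≤ 1 - t) (by ring)
  simp only [smul_eq_mul] at h1
  rw [show t * (t + ε * (1 - t)) + (1 - t) * (t + ε * (0 - t)) = t from by ring] at h1
  have h2 : 0 ≤ (t * ψ (t + ε * (1 - t)) + (1 - t) * ψ (t + ε * (0 - t)) - ψ t) * ε⁻¹ :=
    mul_nonneg (by linarith) (inv_nonneg.2 hε.le)
  nlinarith [h2]

def Bad (ψ : ℝ → ℝ) : Set ℝ :=
  {t | t ∈ Ioo (0:ℝ) 1 ∧ ∃ q : ℚ,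
    (∀ r, 0 ≤ r → r < t → ψ t - ψ r < (q:ℝ) * (t - r)) ∧
    (∀ s, t < s → s ≤ 1 → (q:ℝ) * (s - t) < ψ s - ψ t)}

lemma bad_countable (ψ : ℝ → ℝ) : (Bad ψ).Countable := by
  have hsub : Bad ψ ⊆ ⋃ q : ℚ, {t | t ∈ Ioo (0:ℝ) 1 ∧
      (∀ r, 0 ≤ r → r < t → ψ t - ψ r < (q:ℝ) * (t - r)) ∧
      (∀ s, t < s → s ≤ 1 → (q:ℝ) * (s - t) < ψ s - ψ t)} := by
    rintro t ⟨h1, q, h2, h3⟩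
    exact Set.mem_iUnion.2 ⟨q, h1, h2, h3⟩
  refine Set.Countable.mono hsub (Set.countable_iUnion fun q => Set.Subsingleton.countable ?_)
  rintro t1 ⟨ht1, hq1, hs1⟩ t2 ⟨ht2, hq2, hs2⟩
  by_contra hne
  rcases lt_or_gt_of_ne hne with hlt | hlt
  · have a1 := hs1 t2 hlt ht2.2.le
    have a2 := hq2 t1 ht1.1.le hlt
    linarith
  · have a1 := hs2 t1 hlt ht1.2.le
    have a2 := hq1 t2 ht2.1.le hlt
    linarith

lemma ereal_real {z : EReal} {a b : ℝ} (h1 : (a : EReal) ≤ z) (h2 : z ≤ (b : EReal)) :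
    ∃ r : ℝ, z = (r : EReal) := by
  refine ⟨z.toReal, (EReal.coe_toReal (fun hz => ?_) (fun hz => ?_)).symm⟩
  · rw [hz] at h2
    exact (EReal.coe_lt_top b).not_ge h2
  · rw [hz] at h1
    exact (EReal.bot_lt_coe a).not_ge h1

lemma tendsto_qf {Sf Q : Set (E d)} {f : E d → ℝ} {f' : E d → E d → EReal}
    (hQ : Convex ℝ Q) (hQs : Q ⊆ Sf) (hf' : IsOneSidedDirDeriv f Sf f' Q)
    {x y : E d} (hx : x ∈ Q) (hy : y ∈ Q) {t w : ℝ}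
    (ht : t ∈ Icc (0:ℝ) 1) (hw : w ∈ Icc (0:ℝ) 1) :
    Tendsto (fun ε : ℝ =>
        (((f (y + (t + ε * (w - t)) • (x - y)) - f (y + t • (x - y))) * ε⁻¹ : ℝ) : EReal))
      (𝓝[>] 0) (𝓝 (f' (y + t • (x - y)) ((w - t) • (x - y)))) := by
  have base := hf' _ (comb_mem hQ hx hy ht) ((w - t) • (x - y))
  refine Filter.Tendsto.congr' ?_ base
  filter_upwards [Ioc_mem_nhdsGT_of_mem ⟨le_refl (0:ℝ), zero_lt_one⟩] with ε hε
  have hmem : t + ε * (w - t) ∈ Icc (0:ℝ) 1 := mem_aux ht hw hε.1.le hε.2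
  have hpt : (y + t • (x - y)) + ε • ((w - t) • (x - y)) = y + (t + ε * (w - t)) • (x - y) := by
    module
  rw [hpt]
  rw [show _root_.ext f Sf (y + (t + ε * (w - t)) • (x - y))
      = ((f (y + (t + ε * (w - t)) • (x - y)) : ℝ) : EReal) from
    by simp [_root_.ext, hQs (comb_mem hQ hx hy hmem)]]
  rw [← EReal.coe_sub, ← EReal.coe_mul]

end Helpers
section Helpers2

open Set

variable {d : ℕ}

lemma tendsto_qf0 {Sf Q : Set (E d)} {f : E d → ℝ} {f' : E d → E d → EReal}
    (hQ : Convex ℝ Q) (hQs : Q ⊆ Sf) (hf' : IsOneSidedDirDeriv f Sf f' Q)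
    {x y : E d} (hx : x ∈ Q) (hy : y ∈ Q) :
    Tendsto (fun ε : ℝ => (((f (y + ε • (x - y)) - f y) * ε⁻¹ : ℝ) : EReal))
      (𝓝[>] 0) (𝓝 (f' y (x - y))) := by
  have h := tendsto_qf hQ hQs hf' hx hy (left_mem_Icc.2 zero_le_one) (right_mem_Icc.2 zero_le_one)
  simp only [zero_add, sub_zero, mul_one, zero_smul, add_zero, one_smul] at h
  exact h

lemma qf_mono0 {Sf Q : Set (E d)} {f : E d → ℝ} (hf : ConvexOn ℝ Sf f)
    (hQ : Convex ℝ Q) (hQs : Q ⊆ Sf) {x y : E d} (hx : x ∈ Q) (hy : y ∈ Q)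
    {ε ε' : ℝ} (hε : 0 < ε) (hee : ε ≤ ε') (he1 : ε' ≤ 1) :
    (f (y + ε • (x - y)) - f y) * ε⁻¹ ≤ (f (y + ε' • (x - y)) - f y) * ε'⁻¹ := by
  have h := qf_mono (psi_convexOn hf hQ hQs hx hy)
    (left_mem_Icc.2 zero_le_one) (right_mem_Icc.2 zero_le_one) hε hee he1
  simp only [zero_add, sub_zero, mul_one, zero_smul, add_zero] at h
  exact h

lemma deriv_bounds {Sf Q : Set (E d)} {f : E d → ℝ} {f' : E d → E d → EReal}
    (hf : ConvexOn ℝ Sf f) (hQ : Convex ℝ Q) (hQs : Q ⊆ Sf)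
    (hf' : IsOneSidedDirDeriv f Sf f' Q) {x y : E d} (hx : x ∈ Q) (hy : y ∈ Q)
    {t : ℝ} (ht : t ∈ Ioo (0:ℝ) 1) :
    ∃ fX fY : ℝ,
      f' (y + t • (x - y)) ((1 - t) • (x - y)) = (fX : EReal) ∧
      f' (y + t • (x - y)) ((0 - t) • (x - y)) = (fY : EReal) ∧
      Tendsto (fun ε : ℝ => (f (y + (t + ε * (1 - t)) • (x - y)) - f (y + t • (x - y))) * ε⁻¹)
        (𝓝[>] 0) (𝓝 fX) ∧
      Tendsto (fun ε : ℝ => (f (y + (t + ε * (0 - t)) • (x - y)) - f (y + t • (x - y))) * ε⁻¹)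
        (𝓝[>] 0) (𝓝 fY) := by
  have hψ := psi_convexOn hf hQ hQs hx hy
  have htI : t ∈ Icc (0:ℝ) 1 := Ioo_subset_Icc_self ht
  have T1 := tendsto_qf hQ hQs hf' hx hy htI (right_mem_Icc.2 zero_le_one)
  have T0 := tendsto_qf hQ hQs hf' hx hy htI (left_mem_Icc.2 zero_le_one)
  have Ioc1 : Ioc (0:ℝ) 1 ∈ 𝓝[>] (0:ℝ) := Ioc_mem_nhdsGT_of_mem ⟨le_refl 0, zero_lt_one⟩
  have hub1 : f' (y + t • (x - y)) ((1 - t) • (x - y)) ≤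
      (((f (y + (t + 1 * (1 - t)) • (x - y)) - f (y + t • (x - y))) * (1:ℝ)⁻¹ : ℝ) : EReal) := by
    refine le_of_tendsto T1 ?_
    filter_upwards [Ioc1] with ε hε
    exact EReal.coe_le_coe_iff.2
      (qf_mono hψ htI (right_mem_Icc.2 zero_le_one) hε.1 hε.2 le_rfl)
  have hlb1 : ((((1 - t) * (f (y + t • (x - y)) - f (y + (0:ℝ) • (x - y)))) / (t - 0) : ℝ) : EReal)
      ≤ f' (y + t • (x - y)) ((1 - t) • (x - y)) := by
    refine ge_of_tendsto T1 ?_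
    filter_upwards [Ioc1] with ε hε
    exact EReal.coe_le_coe_iff.2 (ev_X_lb hψ ht (le_refl 0) ht.1 hε.1 hε.2)
  have hub0 : f' (y + t • (x - y)) ((0 - t) • (x - y)) ≤
      (((f (y + (t + 1 * (0 - t)) • (x - y)) - f (y + t • (x - y))) * (1:ℝ)⁻¹ : ℝ) : EReal) := by
    refine le_of_tendsto T0 ?_
    filter_upwards [Ioc1] with ε hε
    exact EReal.coe_le_coe_iff.2
      (qf_mono hψ htI (left_mem_Icc.2 zero_le_one) hε.1 hε.2 le_rfl)
  have hlb0 : (((t * (f (y + t • (x - y)) - f (y + (1:ℝ) • (x - y)))) / (1 - t) : ℝ) : EReal)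
      ≤ f' (y + t • (x - y)) ((0 - t) • (x - y)) := by
    refine ge_of_tendsto T0 ?_
    filter_upwards [Ioc1] with ε hε
    exact EReal.coe_le_coe_iff.2 (ev_Y_lb hψ ht ht.2 le_rfl hε.1 hε.2)
  obtain ⟨fX, eX⟩ := ereal_real hlb1 hub1
  obtain ⟨fY, eY⟩ := ereal_real hlb0 hub0
  rw [eX] at T1
  rw [eY] at T0
  exact ⟨fX, fY, eX, eY, EReal.tendsto_coe.1 T1, EReal.tendsto_coe.1 T0⟩

end Helpers2
open Set in
set_option maxHeartbeats 1000000 in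
/-- first-order characterization of relative smoothness.  With
`D_h(x,y) = h x - h y - h'(y; x - y)` the generalized Bregman divergence (via one-sided
directional derivatives), the extended function `d_L = L·g - h` (equal to `∞` outside `Q`)
is convex iff `D_h(x,y) ≤ L · D_g(x,y)` for all `x, y ∈ Q`. -/
theorem stmt4 {d : ℕ} (h g : E d → ℝ) (Sh Sg : Set (E d))
    (hpc : IsProperClosedConvexOn h Sh) (gpc : IsProperClosedConvexOn g Sg)
    (Q : Set (E d)) (hQ : Convex ℝ Q) (hQsub : Q ⊆ Sh ∩ Sg)
    (L : ℝ) (hL : 0 ≤ L)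
    (h' g' : E d → E d → EReal)
    (hh' : IsOneSidedDirDeriv h Sh h' Q) (hg' : IsOneSidedDirDeriv g Sg g' Q) :
    ConvexOn ℝ Q (fun x => L * g x - h x) ↔
      ∀ x ∈ Q, ∀ y ∈ Q,
        ((h x - h y : ℝ) : EReal) - h' y (x - y) ≤
          ((L : ℝ) : EReal) * (((g x - g y : ℝ) : EReal) - g' y (x - y)) := by
  obtain ⟨-, hconv, -⟩ := hpc
  obtain ⟨-, gconv, -⟩ := gpc
  have hQh : Q ⊆ Sh := fun z hz => (hQsub hz).1
  have hQg : Q ⊆ Sg := fun z hz => (hQsub hz).2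
  have Ioc1 : Ioc (0:ℝ) 1 ∈ 𝓝[>] (0:ℝ) := Ioc_mem_nhdsGT_of_mem ⟨le_refl 0, zero_lt_one⟩
  constructor
  · intro hcvx x hx y hy
    have Th := tendsto_qf0 hQ hQh hh' hx hy
    have Tg := tendsto_qf0 hQ hQg hg' hx hy
    -- the convexity consequence at finite ε
    have star : ∀ ε : ℝ, 0 < ε → ε ≤ 1 →
        (h x - h y) - (h (y + ε • (x - y)) - h y) * ε⁻¹ ≤
          L * ((g x - g y) - (g (y + ε • (x - y)) - g y) * ε⁻¹) := by
      intro ε h0 h1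
      have hc := hcvx.2 hx hy h0.le (by linarith : (0:ℝ) ≤ 1 - ε) (by ring)
      simp only [smul_eq_mul] at hc
      rw [show ε • x + (1 - ε) • y = y + ε • (x - y) from by module] at hc
      have e1 : (h (y + ε • (x - y)) - h y) * ε⁻¹ * ε = h (y + ε • (x - y)) - h y := by
        field_simp
      have e2 : (g (y + ε • (x - y)) - g y) * ε⁻¹ * ε = g (y + ε • (x - y)) - g y := by
        field_simp
      nlinarith [hc, e1, e2, mul_pos h0 h0]
    -- upper bounds exclude ⊤
    have hHub : h' y (x - y) ≤ (((h (y + (1:ℝ) • (x - y)) - h y) * (1:ℝ)⁻¹ : ℝ) : EReal) := by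
      refine le_of_tendsto Th ?_
      filter_upwards [Ioc1] with ε hε
      exact EReal.coe_le_coe_iff.2 (qf_mono0 hconv hQ hQh hx hy hε.1 hε.2 le_rfl)
    have hGub : g' y (x - y) ≤ (((g (y + (1:ℝ) • (x - y)) - g y) * (1:ℝ)⁻¹ : ℝ) : EReal) := by
      refine le_of_tendsto Tg ?_
      filter_upwards [Ioc1] with ε hε
      exact EReal.coe_le_coe_iff.2 (qf_mono0 gconv hQ hQg hx hy hε.1 hε.2 le_rfl)
    have hHtop : h' y (x - y) ≠ ⊤ := ne_top_of_le_ne_top (EReal.coe_ne_top _) hHub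
    have hGtop : g' y (x - y) ≠ ⊤ := ne_top_of_le_ne_top (EReal.coe_ne_top _) hGub
    rcases eq_or_ne (h' y (x - y)) ⊥ with hHbot | hHne
    · -- h-derivative is -∞ : show RHS is ⊤
      rw [hHbot] at Th
      rcases eq_or_lt_of_le hL with hL0 | hLpos
      · exfalso
        have hev := (EReal.tendsto_nhds_bot_iff_real.1 Th (h x - h y)).and Ioc1
        obtain ⟨ε, hlt, hε⟩ := hev.exists
        rw [EReal.coe_lt_coe_iff] at hlt
        have hstar := star ε hε.1 hε.2
        rw [← hL0] at hstar
        simp only [zero_mul] at hstar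
        linarith
      · -- L > 0 : g' is also ⊥
        have hGbot : g' y (x - y) = ⊥ := by
          refine tendsto_nhds_unique Tg ?_
          rw [EReal.tendsto_nhds_bot_iff_real]
          intro M
          have hev := (EReal.tendsto_nhds_bot_iff_real.1 Th
            (L * M - (L * (g x - g y) - (h x - h y)))).and Ioc1
          filter_upwards [hev] with ε hev'
          obtain ⟨hlt, hε⟩ := hev'
          rw [EReal.coe_lt_coe_iff] at hlt
          have hstar := star ε hε.1 hε.2
          rw [EReal.coe_lt_coe_iff]
          have : L * ((g (y + ε • (x - y)) - g y) * ε⁻¹) < L * M := by nlinarith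
          exact (mul_lt_mul_iff_right₀ hLpos).1 this
        rw [hHbot, hGbot, EReal.coe_sub_bot, EReal.coe_sub_bot, EReal.coe_mul_top_of_pos hLpos]
    · -- h' is a real number
      have eH : h' y (x - y) = ((h' y (x - y)).toReal : EReal) :=
        (EReal.coe_toReal hHtop hHne).symm
      set hr := (h' y (x - y)).toReal with hhr
      rw [eH] at Th
      have THr : Tendsto (fun ε : ℝ => (h (y + ε • (x - y)) - h y) * ε⁻¹) (𝓝[>] 0) (𝓝 hr) :=
        EReal.tendsto_coe.1 Th
      rcases eq_or_ne (g' y (x - y)) ⊥ with hGbot | hGne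
      · rcases eq_or_lt_of_le hL with hL0 | hLpos
        · -- L = 0
          rw [hGbot, ← hL0]
          have hA : h x - h y ≤ hr := by
            refine ge_of_tendsto THr ?_
            filter_upwards [Ioc1] with ε hε
            have hstar := star ε hε.1 hε.2
            rw [← hL0] at hstar
            simp only [zero_mul] at hstar
            linarith
          calc ((h x - h y : ℝ) : EReal) - h' y (x - y)
              = (((h x - h y) - hr : ℝ) : EReal) := by rw [eH, ← EReal.coe_sub]
            _ ≤ ((0:ℝ) : EReal) := EReal.coe_le_coe_iff.2 (by linarith)
            _ ≤ ((0:ℝ) : EReal) * (((g x - g y : ℝ) : EReal) - ⊥) := by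
                rw [EReal.coe_sub_bot]
                simp
        · rw [hGbot, EReal.coe_sub_bot, EReal.coe_mul_top_of_pos hLpos]
          exact le_top
      · have eG : g' y (x - y) = ((g' y (x - y)).toReal : EReal) :=
          (EReal.coe_toReal hGtop hGne).symm
        set gr := (g' y (x - y)).toReal with hgr
        rw [eG] at Tg
        have TGr : Tendsto (fun ε : ℝ => (g (y + ε • (x - y)) - g y) * ε⁻¹) (𝓝[>] 0) (𝓝 gr) :=
          EReal.tendsto_coe.1 Tg
        have hreal : (h x - h y) - hr ≤ L * ((g x - g y) - gr) := by
          refine le_of_tendsto_of_tendsto (tendsto_const_nhds.sub THr)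
            ((tendsto_const_nhds.sub TGr).const_mul L) ?_
          filter_upwards [Ioc1] with ε hε
          exact star ε hε.1 hε.2
        rw [eH, eG, ← EReal.coe_sub, ← EReal.coe_sub, ← EReal.coe_mul]
        exact EReal.coe_le_coe_iff.2 hreal
  · intro hB
    refine ⟨hQ, ?_⟩
    intro p hp q hq a b ha hb hab
    have key : ∀ x ∈ Q, ∀ y ∈ Q, ∀ t ∈ Icc (0:ℝ) 1,
        L * g (y + t • (x - y)) - h (y + t • (x - y)) ≤
          (1 - t) * (L * g y - h y) + t * (L * g x - h x) := by
      intro x hx y hy t ht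
      rcases eq_or_lt_of_le ht.1 with h0 | h0
      · rw [← h0]
        norm_num
      rcases eq_or_lt_of_le ht.2 with h1 | h1
      · subst h1
        norm_num
      have htO : t ∈ Ioo (0:ℝ) 1 := ⟨h0, h1⟩
      have hψh := psi_convexOn hconv hQ hQh hx hy
      have hψg := psi_convexOn gconv hQ hQg hx hy
      have good : ∀ s ∈ Ioo (0:ℝ) 1, s ∉ Bad (fun r : ℝ => h (y + r • (x - y))) →
          L * g (y + s • (x - y)) - h (y + s • (x - y)) ≤
            (1 - s) * (L * g y - h y) + s * (L * g x - h x) := by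
        intro s hs hsBad
        obtain ⟨hX, hY, eXh, eYh, TXh, TYh⟩ := deriv_bounds hconv hQ hQh hh' hx hy hs
        obtain ⟨gX, gY, eXg, eYg, TXg, TYg⟩ := deriv_bounds gconv hQ hQg hg' hx hy hs
        have hzQ : y + s • (x - y) ∈ Q := comb_mem hQ hx hy (Ioo_subset_Icc_self hs)
        have B1 := hB x hx (y + s • (x - y)) hzQ
        have B2 := hB y hy (y + s • (x - y)) hzQ
        rw [show x - (y + s • (x - y)) = (1 - s) • (x - y) from by module, eXh, eXg,
          ← EReal.coe_sub, ← EReal.coe_sub, ← EReal.coe_mul] at B1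
        rw [show y - (y + s • (x - y)) = (0 - s) • (x - y) from by module, eYh, eYg,
          ← EReal.coe_sub, ← EReal.coe_sub, ← EReal.coe_mul] at B2
        have R1 : (h x - h (y + s • (x - y))) - hX ≤ L * ((g x - g (y + s • (x - y))) - gX) :=
          EReal.coe_le_coe_iff.1 B1
        have R2 : (h y - h (y + s • (x - y))) - hY ≤ L * ((g y - g (y + s • (x - y))) - gY) :=
          EReal.coe_le_coe_iff.1 B2
        have combo_g : 0 ≤ s * gX + (1 - s) * gY := by
          refine ge_of_tendsto ((TXg.const_mul s).add (TYg.const_mul (1 - s))) ?_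
          filter_upwards [Ioc1] with ε hε
          exact jensen_combo hψg hs hε.1 hε.2
        have combo_h : s * hX + (1 - s) * hY ≤ 0 := by
          by_contra hcon
          push_neg at hcon
          have hs0 : (0:ℝ) < s := hs.1
          have hs1 : s < 1 := hs.2
          have hαβ : -hY / s < hX / (1 - s) := by
            rw [div_lt_div_iff₀ hs0 (by linarith)]
            linarith
          obtain ⟨q', hq1, hq2⟩ := exists_rat_btwn hαβ
          have hq1' : -hY < (q' : ℝ) * s := by
            rw [div_lt_iff₀ hs0] at hq1
            linarith
          have hq2' : (q' : ℝ) * (1 - s) < hX := by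
            rw [lt_div_iff₀ (by linarith : (0:ℝ) < 1 - s)] at hq2
            linarith
          refine hsBad ⟨hs, q', fun r hr0 hrs => ?_, fun σ hσs hσ1 => ?_⟩
          · show h (y + s • (x - y)) - h (y + r • (x - y)) < (q' : ℝ) * (s - r)
            have hb2 : hY ≤ (s * (h (y + r • (x - y)) - h (y + s • (x - y)))) / (s - r) := by
              refine le_of_tendsto TYh ?_
              have hδ : (0:ℝ) < (s - r) / s := div_pos (by linarith) hs0
              filter_upwards [Ioo_mem_nhdsGT_of_mem ⟨le_refl (0:ℝ), hδ⟩] with ε hε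
              exact ev_Y_ub hψh hs hr0 hrs hε.1 ((lt_div_iff₀ hs0).1 hε.2)
            rw [le_div_iff₀ (by linarith : (0:ℝ) < s - r)] at hb2
            have hfin : s * (h (y + s • (x - y)) - h (y + r • (x - y))) <
                s * ((q' : ℝ) * (s - r)) := by
              nlinarith [mul_lt_mul_of_pos_right hq1' (show (0:ℝ) < s - r by linarith)]
            exact (mul_lt_mul_iff_right₀ hs0).1 hfin
          · show (q' : ℝ) * (σ - s) < h (y + σ • (x - y)) - h (y + s • (x - y))
            have hb2 : hX ≤ ((1 - s) * (h (y + σ • (x - y)) - h (y + s • (x - y)))) / (σ - s) := by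
              refine le_of_tendsto TXh ?_
              have hδ : (0:ℝ) < (σ - s) / (1 - s) := div_pos (by linarith) (by linarith)
              filter_upwards [Ioo_mem_nhdsGT_of_mem ⟨le_refl (0:ℝ), hδ⟩] with ε hε
              exact ev_X_ub hψh hs hσs hσ1 hε.1
                ((lt_div_iff₀ (by linarith : (0:ℝ) < 1 - s)).1 hε.2)
            rw [le_div_iff₀ (by linarith : (0:ℝ) < σ - s)] at hb2
            have hfin : (1 - s) * ((q' : ℝ) * (σ - s)) <
                (1 - s) * (h (y + σ • (x - y)) - h (y + s • (x - y))) := by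
              nlinarith [mul_lt_mul_of_pos_right hq2' (show (0:ℝ) < σ - s by linarith)]
            exact (mul_lt_mul_iff_right₀ (by linarith : (0:ℝ) < 1 - s)).1 hfin
        have m1 := mul_le_mul_of_nonneg_left R1 hs.1.le
        have m2 := mul_le_mul_of_nonneg_left R2 (by linarith [hs.2] : (0:ℝ) ≤ 1 - s)
        have m3 : 0 ≤ L * (s * gX + (1 - s) * gY) := mul_nonneg hL combo_g
        nlinarith [m1, m2, m3, combo_h]
      -- density and continuity finish
      have hconth : ContinuousOn (fun r : ℝ => h (y + r • (x - y))) (Ioo (0:ℝ) 1) :=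
        (hψh.subset Ioo_subset_Icc_self (convex_Ioo 0 1)).continuousOn isOpen_Ioo
      have hcontg : ContinuousOn (fun r : ℝ => g (y + r • (x - y))) (Ioo (0:ℝ) 1) :=
        (hψg.subset Ioo_subset_Icc_self (convex_Ioo 0 1)).continuousOn isOpen_Ioo
      have hcont : ContinuousOn (fun r : ℝ =>
          L * g (y + r • (x - y)) - h (y + r • (x - y))
            - ((1 - r) * (L * g y - h y) + r * (L * g x - h x))) (Ioo (0:ℝ) 1) := by
        refine ContinuousOn.sub ((continuousOn_const.mul hcontg).sub hconth) ?_
        exact Continuous.continuousOn (by continuity)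
      have hdense : Dense ((Bad (fun r : ℝ => h (y + r • (x - y))))ᶜ) :=
        (bad_countable _).dense_compl ℝ
      have hne : (𝓝[Ioo (0:ℝ) 1 ∩ (Bad (fun r : ℝ => h (y + r • (x - y))))ᶜ] t).NeBot := by
        rw [← mem_closure_iff_nhdsWithin_neBot]
        exact hdense.open_subset_closure_inter isOpen_Ioo htO
      have hΦ : L * g (y + t • (x - y)) - h (y + t • (x - y))
          - ((1 - t) * (L * g y - h y) + t * (L * g x - h x)) ≤ 0 := by
        haveI := hne
        refine le_of_tendsto ((hcont t htO).mono_left (nhdsWithin_mono t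
          (inter_subset_left (t := (Bad (fun r : ℝ => h (y + r • (x - y))))ᶜ)))) ?_
        filter_upwards [self_mem_nhdsWithin] with σ hσ
        have hgood := good σ hσ.1 hσ.2
        linarith
      linarith
    have ha' : a = 1 - b := by linarith
    dsimp only
    rw [ha']
    rw [show (1 - b) • p + b • q = p + b • (q - p) from by module]
    simp only [smul_eq_mul]
    linarith [key q hq p hp b ⟨hb, by linarith⟩]
end
end

section
/- Let h, g : ℝ^d → ℝ ∪ {∞} be proper closed convex functions differentiable on the interiors of their domains, Q ⊆ int(dom g) ∩ int(dom h) an open convex set, z ∈ Q, and L ≥ 0. If h and g are C² on Q \ {z}, then the function L·g − h (extended by ∞ outside Q) is convex on Q if and only if ∇²h(x) ⪯ L·∇²g(x) for all x ∈ Q \ {z}. -/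
open Filter Topology RealInnerProductSpace Classical

noncomputable section

/-!
Convexity on an open convex set is convexity along every line, and along `t ↦ lineMap x y t` the
second derivative of `f` is `⟪y - x, f'' (lineMap x y t) (y - x)⟫`. A line through two distinct
points meets `z` at most once, so in one variable the derivative `φ'` has a nonnegative derivative
off a single point `t₀`. Then `φ` is convex on both closed halves `I ∩ Iic t₀` and `I ∩ Ici t₀`,
and since it is differentiable at `t₀`, which lies in both, `φ'` is monotone on each half and
therefore on all of `I`. Conversely, the derivative of a convex function along a line is
monotone, so its derivative is nonnegative.
-/

open Set AffineMap

section Real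

variable {I : Set ℝ} {φ φ' φ'' : ℝ → ℝ}

theorem monotoneOn_deriv_of_convexOn_Iic_of_convexOn_Ici (hI : Convex ℝ I)
    (hφ : ∀ t ∈ I, DifferentiableAt ℝ φ t) {t₀ : ℝ} (hl : ConvexOn ℝ (I ∩ Iic t₀) φ)
    (hr : ConvexOn ℝ (I ∩ Ici t₀) φ) : MonotoneOn (deriv φ) I := by
  intro s hs t ht hst
  by_cases hti : t ≤ t₀
  · exact hl.monotoneOn_deriv (fun u hu => hφ u hu.1) ⟨hs, hst.trans hti⟩ ⟨ht, hti⟩ hst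
  by_cases hsi : t₀ ≤ s
  · exact hr.monotoneOn_deriv (fun u hu => hφ u hu.1) ⟨hs, hsi⟩ ⟨ht, hsi.trans hst⟩ hst
  rw [not_le] at hti hsi
  have ht₀ : t₀ ∈ I := hI.ordConnected.out hs ht ⟨hsi.le, hti.le⟩
  calc deriv φ s ≤ deriv φ t₀ :=
        hl.monotoneOn_deriv (fun u hu => hφ u hu.1) ⟨hs, hsi.le⟩ ⟨ht₀, mem_Iic.2 le_rfl⟩ hsi.le
    _ ≤ deriv φ t :=
        hr.monotoneOn_deriv (fun u hu => hφ u hu.1) ⟨ht₀, mem_Ici.2 le_rfl⟩ ⟨ht, hti.le⟩ hti.le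

theorem convexOn_of_hasDerivAt2_nonneg_off_point (hIo : IsOpen I) (hIc : Convex ℝ I) (t₀ : ℝ)
    (hφ : ∀ t ∈ I, HasDerivAt φ (φ' t) t) (hφ' : ∀ t ∈ I, t ≠ t₀ → HasDerivAt φ' (φ'' t) t)
    (hφ'' : ∀ t ∈ I, t ≠ t₀ → 0 ≤ φ'' t) : ConvexOn ℝ I φ := by
  have hcont : ContinuousOn φ I := fun t ht => (hφ t ht).continuousAt.continuousWithinAt
  have convexOn_half {D : Set ℝ} (hDc : Convex ℝ D) (hD : D ⊆ I) (ht₀ : t₀ ∉ interior D) :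
      ConvexOn ℝ D φ := by
    have hint {t} (ht : t ∈ interior D) : t ∈ I ∧ t ≠ t₀ :=
      ⟨hD (interior_subset ht), fun h => ht₀ (h ▸ ht)⟩
    refine convexOn_of_hasDerivWithinAt2_nonneg hDc (hcont.mono hD)
      (fun t ht => (hφ t (hint ht).1).hasDerivWithinAt)
      (fun t ht => (hφ' t (hint ht).1 (hint ht).2).hasDerivWithinAt)
      (fun t ht => hφ'' t (hint ht).1 (hint ht).2)
  have hl : ConvexOn ℝ (I ∩ Iic t₀) φ :=
    convexOn_half (hIc.inter (convex_Iic t₀)) inter_subset_left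
      (by simp [interior_inter, hIo.interior_eq])
  have hr : ConvexOn ℝ (I ∩ Ici t₀) φ :=
    convexOn_half (hIc.inter (convex_Ici t₀)) inter_subset_left
      (by simp [interior_inter, hIo.interior_eq])
  refine MonotoneOn.convexOn_of_deriv hIc hcont ?_ ?_ <;> rw [hIo.interior_eq]
  · exact fun t ht => (hφ t ht).differentiableAt.differentiableWithinAt
  · exact monotoneOn_deriv_of_convexOn_Iic_of_convexOn_Ici hIc
      (fun t ht => (hφ t ht).differentiableAt) hl hr

end Real

section Module

variable {V : Type*} [AddCommGroup V] [Module ℝ V] {f : V → ℝ} {s : Set V}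

theorem convexOn_of_forall_ne_convexOn_comp_lineMap (hs : Convex ℝ s)
    (hline : ∀ x ∈ s, ∀ y ∈ s, x ≠ y →
      ConvexOn ℝ (lineMap x y ⁻¹' s) (f ∘ lineMap (k := ℝ) x y)) :
    ConvexOn ℝ s f := by
  refine ⟨hs, fun x hx y hy a b ha hb hab => ?_⟩
  rcases eq_or_ne x y with rfl | hxy
  · rw [Convex.combo_self hab, ← add_smul, hab, one_smul]
  have h0 : (0 : ℝ) ∈ lineMap x y ⁻¹' s := by simpa using hx
  have h1 : (1 : ℝ) ∈ lineMap x y ⁻¹' s := by simpa using hy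
  have hpt : lineMap x y b = a • x + b • y := by
    rw [lineMap_apply_module, ← hab, add_sub_cancel_right]
  simpa only [Function.comp_apply, smul_eq_mul, mul_zero, mul_one, zero_add, hpt,
    lineMap_apply_zero, lineMap_apply_one] using (hline x hx y hy hxy).2 h0 h1 ha hb hab

theorem exists_forall_ne_lineMap_ne {x y : V} (hxy : x ≠ y) (z : V) :
    ∃ t₀ : ℝ, ∀ t, t ≠ t₀ → lineMap x y t ≠ z := by
  by_cases hz : ∃ t₀ : ℝ, lineMap x y t₀ = z
  · obtain ⟨t₀, ht₀⟩ := hz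
    exact ⟨t₀, fun t ht hzt => ht (lineMap_injective ℝ hxy (hzt.trans ht₀.symm))⟩
  · push Not at hz
    exact ⟨0, fun t _ => hz t⟩

end Module

section InnerProductSpace

variable {F : Type*} [NormedAddCommGroup F] [InnerProductSpace ℝ F]
  {f : F → ℝ} {f' : F → F} {f'' : F → F →L[ℝ] F} {s : Set F}

theorem HasGradientAt.hasDerivAt_comp_lineMap [CompleteSpace F] {x y : F} {t : ℝ} {g : F}
    (hf : HasGradientAt f g (lineMap x y t)) :
    HasDerivAt (fun t => f (lineMap x y t)) ⟪g, y - x⟫ t := by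
  have := (hasGradientAt_iff_hasFDerivAt.mp hf).comp_hasDerivAt t hasDerivAt_lineMap
  simp only [InnerProductSpace.toDual_apply_apply] at this
  exact this

theorem HasFDerivAt.hasDerivAt_inner_comp_lineMap {x y : F} {t : ℝ} {A : F →L[ℝ] F}
    (hf' : HasFDerivAt f' A (lineMap x y t)) :
    HasDerivAt (fun t => ⟪f' (lineMap x y t), y - x⟫) ⟪A (y - x), y - x⟫ t := by
  simpa using (hf'.comp_hasDerivAt t hasDerivAt_lineMap).inner ℝ (hasDerivAt_const t (y - x))

theorem ConvexOn.inner_apply_self_nonneg [CompleteSpace F] (hfc : ConvexOn ℝ s f) (hso : IsOpen s)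
    (hf : ∀ x ∈ s, HasGradientAt f (f' x) x) {x : F} (hx : x ∈ s) {A : F →L[ℝ] F}
    (hf'x : HasFDerivAt f' A x) (v : F) : 0 ≤ ⟪v, A v⟫ := by
  set I := lineMap (k := ℝ) x (x + v) ⁻¹' s
  have hI : I ∈ 𝓝 (0 : ℝ) :=
    (hso.preimage lineMap_continuous).mem_nhds (by simpa [I])
  have hφ : ∀ t ∈ I, HasDerivAt (fun t => f (lineMap x (x + v) t))
      ⟪f' (lineMap x (x + v) t), x + v - x⟫ t := fun t ht => (hf _ ht).hasDerivAt_comp_lineMap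
  have hmono : MonotoneOn (deriv fun t => f (lineMap x (x + v) t)) I :=
    (hfc.comp_affineMap _).monotoneOn_deriv fun t ht => (hφ t ht).differentiableAt
  have hderiv : HasDerivWithinAt (deriv fun t => f (lineMap x (x + v) t))
      ⟪A (x + v - x), x + v - x⟫ I 0 :=
    (HasFDerivAt.hasDerivAt_inner_comp_lineMap (by simpa using hf'x)).hasDerivWithinAt.congr
      (fun t ht => (hφ t ht).deriv) (hφ 0 (mem_of_mem_nhds hI)).deriv
  have hacc : AccPt (0 : ℝ) (𝓟 I) :=
    accPt_iff_frequently_nhdsNE.mpr (eventually_nhdsWithin_of_eventually_nhds hI).frequently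
  simpa [real_inner_comm] using hderiv.nonneg_of_monotoneOn hacc hmono

theorem convexOn_of_inner_apply_self_nonneg [CompleteSpace F] (hso : IsOpen s) (hsc : Convex ℝ s)
    {z : F} (hf : ∀ x ∈ s, HasGradientAt f (f' x) x)
    (hf' : ∀ x ∈ s \ {z}, HasFDerivAt f' (f'' x) x)
    (hf'' : ∀ x ∈ s \ {z}, ∀ v, 0 ≤ ⟪v, f'' x v⟫) : ConvexOn ℝ s f := by
  refine convexOn_of_forall_ne_convexOn_comp_lineMap hsc fun x _ y _ hxy => ?_
  obtain ⟨t₀, ht₀⟩ := exists_forall_ne_lineMap_ne hxy z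
  have hz {t} (ht : t ∈ lineMap x y ⁻¹' s) (htt₀ : t ≠ t₀) : lineMap x y t ∈ s \ {z} :=
    ⟨ht, ht₀ t htt₀⟩
  refine convexOn_of_hasDerivAt2_nonneg_off_point
    (hso.preimage lineMap_continuous) (hsc.affine_preimage _) t₀
    (fun t ht => (hf _ ht).hasDerivAt_comp_lineMap)
    (fun t ht htt₀ => (hf' _ (hz ht htt₀)).hasDerivAt_inner_comp_lineMap)
    (fun t ht htt₀ => ?_)
  simpa [real_inner_comm] using hf'' _ (hz ht htt₀) (y - x)

theorem convexOn_iff_forall_inner_apply_self_nonneg [CompleteSpace F] (hso : IsOpen s)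
    (hsc : Convex ℝ s) (z : F) (hf : ∀ x ∈ s, HasGradientAt f (f' x) x)
    (hf' : ∀ x ∈ s \ {z}, HasFDerivAt f' (f'' x) x) :
    ConvexOn ℝ s f ↔ ∀ x ∈ s \ {z}, ∀ v, 0 ≤ ⟪v, f'' x v⟫ :=
  ⟨fun hfc x hx => hfc.inner_apply_self_nonneg hso hf hx.1 (hf' x hx),
    convexOn_of_inner_apply_self_nonneg hso hsc hf hf'⟩

end InnerProductSpace

theorem stmt5_general {d : ℕ} (h g : E d → ℝ) (Sh Sg : Set (E d))
    (h' g' : E d → E d)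
    (hdiff : ∀ x ∈ interior Sh, HasGradientAt h (h' x) x)
    (gdiff : ∀ x ∈ interior Sg, HasGradientAt g (g' x) x)
    (Q : Set (E d)) (hQo : IsOpen Q) (hQc : Convex ℝ Q)
    (hQsub : Q ⊆ interior Sg ∩ interior Sh)
    (z : E d) (L : ℝ)
    (h'' g'' : E d → (E d →L[ℝ] E d))
    (hC2h : (∀ x ∈ Q \ {z}, HasFDerivAt h' (h'' x) x) ∧ ContinuousOn h'' (Q \ {z}))
    (hC2g : (∀ x ∈ Q \ {z}, HasFDerivAt g' (g'' x) x) ∧ ContinuousOn g'' (Q \ {z})) :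
    ConvexOn ℝ Q (fun x => L * g x - h x) ↔
      ∀ x ∈ Q \ {z}, ∀ v : E d, ⟪v, h'' x v⟫ ≤ L * ⟪v, g'' x v⟫ := by
  have hgrad : ∀ x ∈ Q, HasGradientAt (fun x => L * g x - h x) (L • g' x - h' x) x := by
    intro x hx
    have hg := hasGradientAt_iff_hasFDerivAt.mp (gdiff x (hQsub hx).1)
    have hh := hasGradientAt_iff_hasFDerivAt.mp (hdiff x (hQsub hx).2)
    rw [hasGradientAt_iff_hasFDerivAt, map_sub, map_smul]
    exact (hg.const_mul L).sub hh
  have hhess : ∀ x ∈ Q \ {z}, HasFDerivAt (fun x => L • g' x - h' x) (L • g'' x - h'' x) x :=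
    fun x hx => ((hC2g.1 x hx).const_smul L).sub (hC2h.1 x hx)
  rw [convexOn_iff_forall_inner_apply_self_nonneg hQo hQc z hgrad hhess]
  simp only [sub_apply, smul_apply, inner_sub_right, real_inner_smul_right, sub_nonneg]

/-- second-order characterization of relative smoothness.  `h, g` are proper
closed convex, differentiable (with gradients `h', g'`) on the interiors of their domains,
and `C²` on `Q \ {z}` with Hessians `h'', g''`.  Then `L·g - h` is convex on the open convex
set `Q` iff `∇²h(x) ⪯ L·∇²g(x)` (in the Loewner order, i.e. as quadratic forms) for all
`x ∈ Q \ {z}`. -/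
theorem stmt5 {d : ℕ} (h g : E d → ℝ) (Sh Sg : Set (E d))
    (hpc : IsProperClosedConvexOn h Sh) (gpc : IsProperClosedConvexOn g Sg)
    (h' g' : E d → E d)
    (hdiff : ∀ x ∈ interior Sh, HasGradientAt h (h' x) x)
    (gdiff : ∀ x ∈ interior Sg, HasGradientAt g (g' x) x)
    (Q : Set (E d)) (hQo : IsOpen Q) (hQc : Convex ℝ Q)
    (hQsub : Q ⊆ interior Sg ∩ interior Sh)
    (z : E d) (hz : z ∈ Q) (L : ℝ) (hL : 0 ≤ L)
    (h'' g'' : E d → (E d →L[ℝ] E d))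
    (hC2h : (∀ x ∈ Q \ {z}, HasFDerivAt h' (h'' x) x) ∧ ContinuousOn h'' (Q \ {z}))
    (hC2g : (∀ x ∈ Q \ {z}, HasFDerivAt g' (g'' x) x) ∧ ContinuousOn g'' (Q \ {z})) :
    ConvexOn ℝ Q (fun x => L * g x - h x) ↔
      ∀ x ∈ Q \ {z}, ∀ v : E d, ⟪v, h'' x v⟫ ≤ L * ⟪v, g'' x v⟫ :=
  stmt5_general h g Sh Sg h' g' hdiff gdiff Q hQo hQc hQsub z L h'' g'' hC2h hC2g
end
end

section
/- If f : ℝ^d → ℝ ∪ {∞} is an essentially smooth convex function, then for all x, y ∈ int(dom f), D_{f*}(∇f(y), ∇f(x)) ≤ D_f(x, y), where f* is the convex conjugate of f and D denotes the generalized Bregman divergence defined via one-sided directional derivatives. If f is moreover strictly convex on int(dom f) (i.e., Legendre), then this inequality is an equality. -/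
/-! At an interior point `x` the gradient inequality says that `x` maximises `⟪·, ∇f x⟫ - f`
on `dom f`, so `f*(∇f x) = ⟪x, ∇f x⟫ - f x`; the affine minorant `⟪x, ·⟫ - f x` of `f*` then
bounds every one-sided difference quotient of `f*` at `∇f x` in direction `v` from below by
`⟪x, v⟫`, which is the inequality.

For equality one needs the reverse bound on the directional derivative. Strict convexity makes
`x` the unique maximiser of the concave function `⟪·, ∇f x⟫ - f`, whose hypograph is closed;
by compactness of spheres every maximising sequence then converges to `x`. Near-maximisers
`w_ε` of `⟪·, ∇f x + ε v⟫ - f` form such a sequence as `ε → 0`, and the difference quotient at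
`ε` is at most `⟪w_ε, v⟫ + ε`, so it tends to at most `⟪x, v⟫`. -/

open Filter Topology RealInnerProductSpace Classical

noncomputable section

def IsEssentiallySmooth {d : ℕ} (f : E d → ℝ) (S : Set (E d)) (f' : E d → E d) : Prop :=
  (interior S).Nonempty ∧
  (∀ x ∈ interior S, HasGradientAt f (f' x) x) ∧
  ∀ (u : ℕ → E d) (y : E d), (∀ n, u n ∈ interior S) → y ∈ frontier S →
    Tendsto u atTop (𝓝 y) → Tendsto (fun n => ‖f' (u n)‖) atTop atTop

/-- The convex conjugate `f*` of the function equal to `f` on `S` and `∞` outside. -/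
def conj {d : ℕ} (f : E d → ℝ) (S : Set (E d)) : E d → EReal :=
  fun y => ⨆ x ∈ S, ((⟪x, y⟫ - f x : ℝ) : EReal)

/-- `φ' y v` is the one-sided directional derivative of the extended-real-valued convex
function `φ` at `y` in direction `v`, for `y` ranging over the set `T`. -/
def IsOneSidedDirDerivE {d : ℕ} (φ : E d → EReal) (φ' : E d → E d → EReal)
    (T : Set (E d)) : Prop :=
  ∀ y ∈ T, ∀ v : E d,
    Tendsto (fun ε : ℝ => (φ (y + ε • v) - φ y) * ((ε⁻¹ : ℝ) : EReal))
      (𝓝[>] 0) (𝓝 (φ' y v))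

section ConvexAnalysis

variable {F : Type*} [NormedAddCommGroup F] [InnerProductSpace ℝ F]

theorem ConvexOn.isMaxOn_inner_sub_of_hasGradientAt [CompleteSpace F] {f : F → ℝ} {S : Set F}
    (hf : ConvexOn ℝ S f) {x u : F} (hx : x ∈ S) (hu : HasGradientAt f u x) :
    IsMaxOn (fun z => ⟪z, u⟫ - f z) S x := by
  intro z hz
  set ℓ : ℝ →ᵃ[ℝ] F := AffineMap.lineMap x z
  have hℓ : HasDerivAt ℓ (z - x) 0 := AffineMap.hasDerivAt_lineMap
  have hderiv : HasDerivAt (f ∘ ℓ) ⟪u, z - x⟫ 0 := by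
    simpa using hu.hasFDerivAt.comp_hasDerivAt_of_eq 0 hℓ (by simp [ℓ])
  have hslope := (hf.comp_affineMap ℓ).le_slope_of_hasDerivAt (x := 0) (y := 1) (by simpa [ℓ])
    (by simpa [ℓ]) one_pos hderiv
  simp only [slope, Function.comp_apply, ℓ, AffineMap.lineMap_apply_zero,
    AffineMap.lineMap_apply_one, sub_zero, inv_one, smul_eq_mul, vsub_eq_sub, one_mul] at hslope
  simp only [Set.mem_ofPred_eq, inner_sub_right, real_inner_comm u] at hslope ⊢
  linarith

theorem ConcaveOn.eq_of_isMaxOn_of_le {φ : F → ℝ} {S : Set F} (hφ : ConcaveOn ℝ S φ)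
    (hstrict : StrictConcaveOn ℝ (interior S) φ) {x w : F} (hx : x ∈ interior S)
    (hmax : IsMaxOn φ S x) (hw : w ∈ S) (hle : φ x ≤ φ w) : w = x := by
  set m : F := (2⁻¹ : ℝ) • x + (2⁻¹ : ℝ) • w
  have hm : m ∈ interior S :=
    hφ.1.combo_interior_self_mem_interior hx hw (by norm_num) (by norm_num) (by norm_num)
  have hφm : φ x ≤ φ m := by
    have : 2⁻¹ * φ x + 2⁻¹ * φ w ≤ φ m :=
      hφ.2 (interior_subset hx) hw (by norm_num) (by norm_num) (by norm_num)
    linarith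
  have hxm : x = m := hstrict.eq_of_isMaxOn (hmax.on_subset interior_subset)
    (fun z hz => (hmax (interior_subset hz)).trans hφm) hx hm
  calc w = (2 : ℝ) • m - x := by simp only [m]; module
    _ = x := by rw [← hxm]; module

theorem ConcaveOn.exists_mem_sphere_le_of_isMaxOn {φ : F → ℝ} {S : Set F}
    (hφ : ConcaveOn ℝ S φ) {x w : F} (hx : x ∈ S) (hmax : IsMaxOn φ S x) (hw : w ∈ S)
    {ρ : ℝ} (hρ : 0 < ρ) (hρw : ρ ≤ dist w x) :
    ∃ p ∈ S ∩ Metric.sphere x ρ, φ w ≤ φ p := by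
  have hwx : 0 < dist w x := hρ.trans_le hρw
  set t := ρ / dist w x
  have ht0 : 0 ≤ t := by positivity
  have ht1 : t ≤ 1 := (div_le_one hwx).2 hρw
  refine ⟨(1 - t) • x + t • w, ⟨hφ.1 hx hw (by linarith) ht0 (by ring), ?_⟩, ?_⟩
  · have : (1 - t) • x + t • w - x = t • (w - x) := by module
    rw [Metric.mem_sphere, dist_eq_norm, this, norm_smul, Real.norm_of_nonneg ht0,
      ← dist_eq_norm, div_mul_cancel₀ _ hwx.ne']
  · have : (1 - t) * φ x + t * φ w ≤ φ ((1 - t) • x + t • w) :=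
      hφ.2 hx hw (by linarith) ht0 (by ring)
    have hwx' : φ w ≤ φ x := hmax hw
    nlinarith

theorem ConcaveOn.tendsto_of_tendsto_comp_of_isMaxOn [ProperSpace F] {φ : F → ℝ} {S : Set F}
    (hφ : ConcaveOn ℝ S φ) (hclosed : IsClosed {p : F × ℝ | p.1 ∈ S ∧ p.2 ≤ φ p.1})
    {x : F} (hx : x ∈ S) (hmax : IsMaxOn φ S x) (huniq : ∀ w ∈ S, φ x ≤ φ w → w = x)
    {W : ℕ → F} (hW : ∀ n, W n ∈ S) (hφW : Tendsto (φ ∘ W) atTop (𝓝 (φ x))) :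
    Tendsto W atTop (𝓝 x) := by
  rw [Metric.tendsto_atTop]
  intro ρ hρ
  by_contra! hfar
  -- Points of a subsequence staying `ρ` away from `x` are pulled back to the sphere of
  -- radius `ρ`; a limit point there would be a second maximiser.
  obtain ⟨ψ, hψ, hψfar⟩ := extraction_of_frequently_atTop (frequently_atTop.2 hfar)
  choose p hp hφp using fun k =>
    hφ.exists_mem_sphere_le_of_isMaxOn hx hmax (hW (ψ k)) hρ (hψfar k)
  obtain ⟨q, hq, χ, hχ, hpq⟩ := (isCompact_sphere x ρ).tendsto_subseq fun k => (hp k).2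
  have hmem : (q, φ x) ∈ {p : F × ℝ | p.1 ∈ S ∧ p.2 ≤ φ p.1} :=
    hclosed.isSeqClosed (fun k => ⟨(hp (χ k)).1, hφp (χ k)⟩)
      (hpq.prodMk_nhds (hφW.comp (hψ.comp hχ).tendsto_atTop))
  rw [huniq q hmem.1 hmem.2, Metric.mem_sphere, dist_self] at hq
  exact hρ.ne hq

theorem ConvexOn.concaveOn_inner_sub {f : F → ℝ} {S : Set F} (hf : ConvexOn ℝ S f) (u : F) :
    ConcaveOn ℝ S (fun z => ⟪z, u⟫ - f z) :=
  (((innerₛₗ ℝ u).concaveOn hf.1).sub hf).congr fun z _ => by simp [real_inner_comm]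

theorem StrictConvexOn.strictConcaveOn_inner_sub {f : F → ℝ} {S : Set F}
    (hf : StrictConvexOn ℝ S f) (u : F) :
    StrictConcaveOn ℝ S (fun z => ⟪z, u⟫ - f z) :=
  (((innerₛₗ ℝ u).concaveOn hf.1).sub_strictConvexOn hf).congr fun z _ => by
    simp [real_inner_comm]

theorem isClosed_hypograph_inner_sub {f : F → ℝ} {S : Set F}
    (hclosed : IsClosed {p : F × ℝ | p.1 ∈ S ∧ f p.1 ≤ p.2}) (u : F) :
    IsClosed {p : F × ℝ | p.1 ∈ S ∧ p.2 ≤ ⟪p.1, u⟫ - f p.1} := by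
  have := hclosed.preimage (f := fun p : F × ℝ => (p.1, ⟪p.1, u⟫ - p.2)) (by fun_prop)
  convert this using 1
  ext p
  constructor <;> rintro ⟨h1, h2⟩ <;> exact ⟨h1, by linarith⟩

theorem ConvexOn.tendsto_of_tendsto_inner_sub [ProperSpace F] {f : F → ℝ} {S : Set F}
    (hf : ConvexOn ℝ S f) (hstrict : StrictConvexOn ℝ (interior S) f)
    (hclosed : IsClosed {p : F × ℝ | p.1 ∈ S ∧ f p.1 ≤ p.2}) {x u : F} (hx : x ∈ interior S)
    (hmax : IsMaxOn (fun z => ⟪z, u⟫ - f z) S x) {W : ℕ → F} (hW : ∀ n, W n ∈ S)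
    (hWmax : Tendsto (fun n => ⟪W n, u⟫ - f (W n)) atTop (𝓝 (⟪x, u⟫ - f x))) :
    Tendsto W atTop (𝓝 x) :=
  (hf.concaveOn_inner_sub u).tendsto_of_tendsto_comp_of_isMaxOn
    (isClosed_hypograph_inner_sub hclosed u) (interior_subset hx) hmax
    (fun _ hw hle => (hf.concaveOn_inner_sub u).eq_of_isMaxOn_of_le
      (hstrict.strictConcaveOn_inner_sub u) hx hmax hw hle) hW hWmax

end ConvexAnalysis

section Conjugate

variable {d : ℕ} {f : E d → ℝ} {S : Set (E d)}

theorem inner_sub_le_conj {w : E d} (hw : w ∈ S) (z : E d) :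
    ((⟪w, z⟫ - f w : ℝ) : EReal) ≤ conj f S z :=
  le_iSup₂ (f := fun x (_ : x ∈ S) => ((⟪x, z⟫ - f x : ℝ) : EReal)) w hw

theorem conj_le_coe {z : E d} {M : ℝ} (hM : ∀ w ∈ S, ⟪w, z⟫ - f w ≤ M) : conj f S z ≤ M :=
  iSup₂_le fun w hw => EReal.coe_le_coe_iff.2 (hM w hw)

theorem conj_eq_of_isMaxOn {x u : E d} (hx : x ∈ S) (hmax : IsMaxOn (fun z => ⟪z, u⟫ - f z) S x) :
    conj f S u = ((⟪x, u⟫ - f x : ℝ) : EReal) :=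
  le_antisymm (conj_le_coe fun _ hw => hmax hw) (inner_sub_le_conj hx u)

theorem inner_sub_le_toReal_conj {w z : E d} (hw : w ∈ S) (hz : conj f S z ≠ ⊤) :
    ⟪w, z⟫ - f w ≤ (conj f S z).toReal := by
  have := EReal.toReal_le_toReal (inner_sub_le_conj hw z) (EReal.coe_ne_bot _) hz
  rwa [EReal.toReal_coe] at this

theorem exists_lt_inner_sub_of_lt_conj {z : E d} {c : ℝ} (hc : (c : EReal) < conj f S z) :
    ∃ w ∈ S, c < ⟪w, z⟫ - f w := by
  obtain ⟨w, hw⟩ := lt_iSup_iff.1 hc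
  obtain ⟨hwS, hlt⟩ := lt_iSup_iff.1 hw
  exact ⟨w, hwS, EReal.coe_lt_coe_iff.1 hlt⟩

theorem inner_le_of_tendsto_conj_slope {x u v : E d} {L : EReal} (hx : x ∈ S)
    (hmax : IsMaxOn (fun z => ⟪z, u⟫ - f z) S x)
    (hL : Tendsto (fun ε : ℝ => (conj f S (u + ε • v) - conj f S u) * ((ε⁻¹ : ℝ) : EReal))
      (𝓝[>] 0) (𝓝 L)) :
    ((⟪x, v⟫ : ℝ) : EReal) ≤ L := by
  refine ge_of_tendsto hL ?_
  filter_upwards [self_mem_nhdsWithin] with ε (hε : 0 < ε)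
  have hlow : ((⟪x, u⟫ - f x + ε * ⟪x, v⟫ : ℝ) : EReal) ≤ conj f S (u + ε • v) := by
    simpa [inner_add_right, real_inner_smul_right, add_sub_right_comm] using
      inner_sub_le_conj (f := f) hx (u + ε • v)
  calc ((⟪x, v⟫ : ℝ) : EReal)
      = (((⟪x, u⟫ - f x + ε * ⟪x, v⟫ : ℝ) : EReal) - ((⟪x, u⟫ - f x : ℝ) : EReal)) *
          ((ε⁻¹ : ℝ) : EReal) := by
        norm_cast; field_simp; ring
    _ ≤ (conj f S (u + ε • v) - conj f S u) * ((ε⁻¹ : ℝ) : EReal) := by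
        rw [conj_eq_of_isMaxOn hx hmax]
        gcongr
        exact EReal.sub_le_sub hlow le_rfl

theorem exists_mem_conj_slope_le {x u u' : E d} (hx : x ∈ S)
    (hmax : IsMaxOn (fun z => ⟪z, u⟫ - f z) S x) (hu' : conj f S u' ≠ ⊤) {t : ℝ} (ht0 : 0 < t)
    (ht1 : t < 1) :
    ∃ w ∈ S,
      (conj f S (u + t • (u' - u)) - conj f S u) * ((t⁻¹ : ℝ) : EReal) ≤
        ((⟪w, u' - u⟫ + t : ℝ) : EReal) ∧
      ⟪x, u⟫ - f x + t * (⟪x, u' - u⟫ - t - (conj f S u').toReal) ≤ (1 - t) * (⟪w, u⟫ - f w) := by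
  have hsplit : ∀ w, ⟪w, u + t • (u' - u)⟫ - f w =
      (1 - t) * (⟪w, u⟫ - f w) + t * (⟪w, u'⟫ - f w) := fun w => by
    simp only [inner_add_right, real_inner_smul_right, inner_sub_right]; ring
  have hup : conj f S (u + t • (u' - u)) ≤
      (((1 - t) * (⟪x, u⟫ - f x) + t * (conj f S u').toReal : ℝ) : EReal) :=
    conj_le_coe fun w hw => by
      have h₁ := mul_le_mul_of_nonneg_left (hmax hw) (sub_nonneg.2 ht1.le)
      have h₂ := mul_le_mul_of_nonneg_left (inner_sub_le_toReal_conj hw hu') ht0.le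
      rw [hsplit]
      linarith
  have hlow := inner_sub_le_conj (f := f) hx (u + t • (u' - u))
  set m := (conj f S (u + t • (u' - u))).toReal
  have hm : conj f S (u + t • (u' - u)) = m :=
    (EReal.coe_toReal (ne_top_of_le_ne_top (EReal.coe_ne_top _) hup)
      (ne_bot_of_le_ne_bot (EReal.coe_ne_bot _) hlow)).symm
  rw [hm, EReal.coe_le_coe_iff] at hlow
  obtain ⟨w, hw, hlt⟩ := exists_lt_inner_sub_of_lt_conj (f := f) (c := m - t ^ 2)
    (by rw [hm, EReal.coe_lt_coe_iff]; nlinarith)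
  have hwu : ⟪w, u⟫ - f w ≤ ⟪x, u⟫ - f x := hmax hw
  have hwu' := inner_sub_le_toReal_conj hw hu'
  rw [hsplit] at hlt hlow
  refine ⟨w, hw, ?_, ?_⟩
  · rw [hm, conj_eq_of_isMaxOn hx hmax, ← EReal.coe_sub, ← EReal.coe_mul, EReal.coe_le_coe_iff,
      ← div_eq_mul_inv, div_le_iff₀ ht0, inner_sub_right]
    linarith
  · rw [inner_sub_right]
    linarith [mul_le_mul_of_nonneg_left hwu' ht0.le]

theorem le_inner_of_tendsto_conj_slope {x u u' : E d} {L : EReal} (hx : x ∈ S)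
    (hmax : IsMaxOn (fun z => ⟪z, u⟫ - f z) S x)
    (hwp : ∀ W : ℕ → E d, (∀ n, W n ∈ S) →
      Tendsto (fun n => ⟪W n, u⟫ - f (W n)) atTop (𝓝 (⟪x, u⟫ - f x)) → Tendsto W atTop (𝓝 x))
    (hu' : conj f S u' ≠ ⊤)
    (hL : Tendsto (fun ε : ℝ => (conj f S (u + ε • (u' - u)) - conj f S u) * ((ε⁻¹ : ℝ) : EReal))
      (𝓝[>] 0) (𝓝 L)) :
    L ≤ ((⟪x, u' - u⟫ : ℝ) : EReal) := by
  obtain ⟨ε, -, hε, hε0⟩ := exists_seq_strictAnti_tendsto' (zero_lt_one' ℝ)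
  choose W hW hslope hlow using fun n => exists_mem_conj_slope_le hx hmax hu' (hε n).1 (hε n).2
  have hbound : Tendsto (fun n => (⟪x, u⟫ - f x +
      ε n * (⟪x, u' - u⟫ - ε n - (conj f S u').toReal)) / (1 - ε n)) atTop (𝓝 (⟪x, u⟫ - f x)) := by
    have hcont : ContinuousAt (fun t : ℝ => (⟪x, u⟫ - f x +
        t * (⟪x, u' - u⟫ - t - (conj f S u').toReal)) / (1 - t)) 0 := by
      fun_prop (disch := norm_num)
    have h0 := hcont.tendsto
    simp only [zero_mul, add_zero, sub_zero, div_one] at h0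
    exact h0.comp hε0
  have hWmax : Tendsto (fun n => ⟪W n, u⟫ - f (W n)) atTop (𝓝 (⟪x, u⟫ - f x)) :=
    tendsto_of_tendsto_of_tendsto_of_le_of_le hbound tendsto_const_nhds
      (fun n => (div_le_iff₀' (sub_pos.2 (hε n).2)).2 (hlow n)) (fun n => hmax (hW n))
  have hε' : Tendsto ε atTop (𝓝[>] 0) :=
    tendsto_nhdsWithin_iff.2 ⟨hε0, Eventually.of_forall fun n => (hε n).1⟩
  have hinner : Tendsto (fun n => ⟪W n, u' - u⟫ + ε n) atTop (𝓝 ⟪x, u' - u⟫) := by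
    simpa using ((hwp W hW hWmax).inner tendsto_const_nhds).add hε0
  exact le_of_tendsto_of_tendsto' (hL.comp hε')
    ((continuous_coe_real_ereal.tendsto _).comp hinner) hslope

end Conjugate

/-- for essentially smooth convex `f` and all `x, y ∈ int(dom f)`,
`D_{f*}(∇f(y), ∇f(x)) ≤ D_f(x, y)`, where `D_{f*}` is the generalized Bregman divergence of
the convex conjugate (defined through one-sided directional derivatives `fstar'`); if `f` is
moreover strictly convex on `int(dom f)` (Legendre), this is an equality. -/
theorem stmt6 {d : ℕ} (f : E d → ℝ) (S : Set (E d)) (f' : E d → E d)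
    (hpcc : IsProperClosedConvexOn f S)
    (hes : IsEssentiallySmooth f S f')
    (fstar' : E d → E d → EReal)
    (hdir : IsOneSidedDirDerivE (conj f S) fstar' (f' '' interior S)) :
    (∀ x ∈ interior S, ∀ y ∈ interior S,
      conj f S (f' y) - conj f S (f' x) - fstar' (f' x) (f' y - f' x) ≤
        ((f x - f y - ⟪f' y, x - y⟫ : ℝ) : EReal)) ∧
    (StrictConvexOn ℝ (interior S) f →
      ∀ x ∈ interior S, ∀ y ∈ interior S,
        conj f S (f' y) - conj f S (f' x) - fstar' (f' x) (f' y - f' x) =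
          ((f x - f y - ⟪f' y, x - y⟫ : ℝ) : EReal)) := by
  obtain ⟨-, hconv, hclosed⟩ := hpcc
  obtain ⟨-, hgrad, -⟩ := hes
  have hmax : ∀ x ∈ interior S, IsMaxOn (fun z => ⟪z, f' x⟫ - f z) S x := fun x hx =>
    hconv.isMaxOn_inner_sub_of_hasGradientAt (interior_subset hx) (hgrad x hx)
  have hconj : ∀ x ∈ interior S, conj f S (f' x) = ((⟪x, f' x⟫ - f x : ℝ) : EReal) :=
    fun x hx => conj_eq_of_isMaxOn (interior_subset hx) (hmax x hx)
  have hbregman : ∀ x ∈ interior S, ∀ y ∈ interior S,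
      conj f S (f' y) - conj f S (f' x) - ((⟪x, f' y - f' x⟫ : ℝ) : EReal) =
        ((f x - f y - ⟪f' y, x - y⟫ : ℝ) : EReal) := fun x hx y hy => by
    rw [hconj x hx, hconj y hy]
    norm_cast
    simp only [inner_sub_right, real_inner_comm (f' y)]
    ring
  have hlow : ∀ x ∈ interior S, ∀ y ∈ interior S,
      ((⟪x, f' y - f' x⟫ : ℝ) : EReal) ≤ fstar' (f' x) (f' y - f' x) := fun x hx y hy =>
    inner_le_of_tendsto_conj_slope (interior_subset hx) (hmax x hx) (hdir _ ⟨x, hx, rfl⟩ _)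
  refine ⟨fun x hx y hy => hbregman x hx y hy ▸ EReal.sub_le_sub le_rfl (hlow x hx y hy),
    fun hstrict x hx y hy => ?_⟩
  have hup : fstar' (f' x) (f' y - f' x) ≤ ((⟪x, f' y - f' x⟫ : ℝ) : EReal) :=
    le_inner_of_tendsto_conj_slope (interior_subset hx) (hmax x hx)
      (fun _ hW hWmax => hconv.tendsto_of_tendsto_inner_sub hstrict hclosed hx (hmax x hx) hW hWmax)
      (by rw [hconj y hy]; exact EReal.coe_ne_top _) (hdir _ ⟨x, hx, rfl⟩ _)
  rw [le_antisymm hup (hlow x hx y hy), hbregman x hx y hy]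
end
end

section
/- Fix 1 < q < 2 and let k(x*) = |x*|^q / q on ℝ. There is no twice continuously differentiable convex function h : ℝ → ℝ such that every function f_b(x) = |x − b|^p / p, b ∈ ℝ (with 1/p + 1/q = 1, so p > 2), is both L-smooth and μ-strongly convex relative to h for some constants L ≥ μ > 0. In particular, each f_b satisfies [k''(f_b'(x))]⁻¹ = f_b''(x) for all x ≠ b, but no single C² reference function h works for all translates f_b in the primal relative sense. -/
/-!
For `x ≠ b` the identity is a direct computation: `f_b'' (x) = (p - 1) |x - b| ^ (p - 2)`,
`k'' (y) = (q - 1) |y| ^ (q - 2)`, `|f_b' (x)| = |x - b| ^ (p - 1)`, and `(p - 1) (q - 1) = 1`.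

For the second part, convexity of `L h - f` and `f - μ h` for differentiable functions gives
`μ h'' ≤ f'' ≤ L h''` pointwise. Since `p > 2`, `f_b` is twice differentiable with
`f_b'' (b) = 0`: strong convexity of `f_0` forces `h'' (0) ≤ 0`, while smoothness of `f_1` forces
`L h'' (0) ≥ f_1'' (0) = p - 1 > 0`, which is impossible for `L > 0`.
-/

open Filter Topology Set

section AbsRpow

variable {r s x : ℝ}

theorem hasDerivAt_abs_rpow_of_ne_zero (hx : x ≠ 0) (s : ℝ) :
    HasDerivAt (fun y : ℝ => |y| ^ s) (s * |x| ^ (s - 2) * x) x := by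
  have hx' : |x| ≠ 0 := abs_ne_zero.2 hx
  refine ((Real.hasDerivAt_rpow_const (p := s) (Or.inl hx')).comp x
    (hasDerivAt_abs hx)).congr_deriv ?_
  rw [show s - 1 = s - 2 + 1 by ring, Real.rpow_add_one hx', mul_assoc, mul_assoc, abs_mul_sign]
  ring

theorem hasDerivAt_abs_rpow_mul_self (h : x ≠ 0 ∨ 0 < s) :
    HasDerivAt (fun y : ℝ => |y| ^ s * y) ((s + 1) * |x| ^ s) x := by
  rcases eq_or_ne x 0 with rfl | hx
  · have hs : 0 < s := h.resolve_left (not_not.2 rfl)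
    rw [hasDerivAt_iff_tendsto_slope, abs_zero, Real.zero_rpow hs.ne', mul_zero]
    have hcont : Tendsto (fun y : ℝ => |y| ^ s) (𝓝 0) (𝓝 0) :=
      (continuous_abs.rpow_const fun _ => Or.inr hs.le).tendsto' 0 0
        (by rw [abs_zero, Real.zero_rpow hs.ne'])
    refine (hcont.mono_left nhdsWithin_le_nhds).congr' ?_
    filter_upwards [self_mem_nhdsWithin] with y hy
    simp [slope_def_field, mul_div_assoc, div_self hy]
  · refine ((hasDerivAt_abs_rpow_of_ne_zero hx s).mul (hasDerivAt_id x)).congr_deriv ?_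
    have hx' : |x| ≠ 0 := abs_ne_zero.2 hx
    rw [id, mul_one, mul_assoc, ← abs_mul_abs_self,
      show |x| ^ s = |x| ^ (s - 2 + 1 + 1) by ring_nf, Real.rpow_add_one hx', Real.rpow_add_one hx']
    ring

theorem hasDerivAt_abs_sub_rpow_div (hr : 1 < r) (b x : ℝ) :
    HasDerivAt (fun y : ℝ => |y - b| ^ r / r) (|x - b| ^ (r - 2) * (x - b)) x := by
  refine (((hasDerivAt_abs_rpow (x - b) hr).div_const r).comp_sub_const x b).congr_deriv ?_
  field_simp

theorem deriv_abs_sub_rpow_div (hr : 1 < r) (b : ℝ) :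
    deriv (fun y : ℝ => |y - b| ^ r / r) = fun x => |x - b| ^ (r - 2) * (x - b) :=
  funext fun x => (hasDerivAt_abs_sub_rpow_div hr b x).deriv

theorem hasDerivAt_deriv_abs_sub_rpow_div {b : ℝ} (hr : 1 < r) (h : x ≠ b ∨ 2 < r) :
    HasDerivAt (deriv fun y : ℝ => |y - b| ^ r / r) ((r - 1) * |x - b| ^ (r - 2)) x := by
  rw [deriv_abs_sub_rpow_div hr]
  refine ((hasDerivAt_abs_rpow_mul_self (s := r - 2) (x := x - b)
    (h.imp sub_ne_zero.2 sub_pos.2)).comp_sub_const x b).congr_deriv ?_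
  ring_nf

end AbsRpow

theorem Real.HolderConjugate.sub_one_mul_sub_one {p q : ℝ} (h : p.HolderConjugate q) :
    (p - 1) * (q - 1) = 1 := by
  linear_combination h.mul_eq_add

theorem Real.HolderConjugate.two_lt_of_lt_two {p q : ℝ} (h : p.HolderConjugate q) (hq : q < 2) :
    2 < p := by
  nlinarith [h.sub_one_mul_sub_one, h.symm.sub_one_pos]

theorem deriv2_abs_rpow_div_deriv_mul_deriv2_abs_sub_rpow_div {p q b x : ℝ}
    (hpq : p.HolderConjugate q) (hx : x ≠ b) :
    deriv (deriv fun y : ℝ => |y| ^ q / q) (deriv (fun w : ℝ => |w - b| ^ p / p) x) *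
      deriv (deriv fun w : ℝ => |w - b| ^ p / p) x = 1 := by
  have ht : 0 < |x - b| := abs_pos.2 (sub_ne_zero.2 hx)
  have hy : |deriv (fun w : ℝ => |w - b| ^ p / p) x| = |x - b| ^ (p - 1) := by
    rw [deriv_abs_sub_rpow_div hpq.lt, abs_mul, abs_of_nonneg (Real.rpow_nonneg ht.le _),
      ← Real.rpow_add_one ht.ne']
    ring_nf
  have hk := hasDerivAt_deriv_abs_sub_rpow_div (b := 0) hpq.symm.lt
    (x := deriv (fun w : ℝ => |w - b| ^ p / p) x)
    (Or.inl (abs_pos.1 (hy ▸ Real.rpow_pos_of_pos ht _)))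
  simp only [sub_zero] at hk
  rw [hk.deriv, (hasDerivAt_deriv_abs_sub_rpow_div hpq.lt (Or.inl hx)).deriv, hy,
    ← Real.rpow_mul ht.le]
  calc (q - 1) * |x - b| ^ ((p - 1) * (q - 2)) * ((p - 1) * |x - b| ^ (p - 2))
      = (p - 1) * (q - 1) * |x - b| ^ ((p - 1) * (q - 2) + (p - 2)) := by
        rw [Real.rpow_add ht]; ring
    _ = 1 := by
        rw [show (p - 1) * (q - 2) + (p - 2) = (p - 1) * (q - 1) - 1 by ring,
          hpq.sub_one_mul_sub_one, sub_self, Real.rpow_zero, mul_one]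

theorem ConvexOn.deriv2_nonneg {f : ℝ → ℝ} (hf : ConvexOn ℝ univ f) (hd : Differentiable ℝ f)
    (x : ℝ) : 0 ≤ deriv (deriv f) x :=
  (monotoneOn_univ.1 (hf.monotoneOn_deriv fun y _ => hd y)).deriv_nonneg

theorem deriv2_le_of_convexOn_sub {f g : ℝ → ℝ} {x : ℝ}
    (hfg : ConvexOn ℝ univ fun y => f y - g y) (hf : Differentiable ℝ f) (hg : Differentiable ℝ g)
    (hf' : DifferentiableAt ℝ (deriv f) x) (hg' : DifferentiableAt ℝ (deriv g) x) :
    deriv (deriv g) x ≤ deriv (deriv f) x := by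
  have hderiv : deriv (fun y => f y - g y) = fun y => deriv f y - deriv g y :=
    funext fun y => deriv_fun_sub (hf y) (hg y)
  have := hfg.deriv2_nonneg (hf.sub hg) x
  rw [hderiv, deriv_fun_sub hf' hg'] at this
  linarith

def IsRelSmooth (L : ℝ) (f h : ℝ → ℝ) : Prop :=
  ConvexOn ℝ univ fun x => L * h x - f x

def IsRelStronglyConvex (μ : ℝ) (f h : ℝ → ℝ) : Prop :=
  ConvexOn ℝ univ fun x => f x - μ * h x

section Relative

variable {L μ x : ℝ} {f h : ℝ → ℝ}

theorem IsRelSmooth.deriv2_le (hfh : IsRelSmooth L f h) (hf : Differentiable ℝ f)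
    (hh : Differentiable ℝ h) (hf' : DifferentiableAt ℝ (deriv f) x)
    (hh' : DifferentiableAt ℝ (deriv h) x) :
    deriv (deriv f) x ≤ L * deriv (deriv h) x := by
  have := deriv2_le_of_convexOn_sub hfh (hh.const_mul L) hf
    (by rw [deriv_const_mul_field']; exact hh'.const_mul L) hf'
  rwa [deriv_const_mul_field', deriv_const_mul_field'] at this

theorem IsRelStronglyConvex.deriv2_le (hfh : IsRelStronglyConvex μ f h)
    (hf : Differentiable ℝ f) (hh : Differentiable ℝ h) (hf' : DifferentiableAt ℝ (deriv f) x)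
    (hh' : DifferentiableAt ℝ (deriv h) x) :
    μ * deriv (deriv h) x ≤ deriv (deriv f) x := by
  have := deriv2_le_of_convexOn_sub hfh hf (hh.const_mul μ) hf'
    (by rw [deriv_const_mul_field']; exact hh'.const_mul μ)
  rwa [deriv_const_mul_field', deriv_const_mul_field'] at this

end Relative

theorem not_forall_isRelSmooth_isRelStronglyConvex_abs_sub_rpow_div {p : ℝ} (hp : 2 < p)
    {h : ℝ → ℝ} (hh : ContDiff ℝ 2 h) :
    ¬ ∀ b : ℝ, ∃ L μ : ℝ, 0 < μ ∧ μ ≤ L ∧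
      IsRelSmooth L (fun x => |x - b| ^ p / p) h ∧
      IsRelStronglyConvex μ (fun x => |x - b| ^ p / p) h := by
  intro hb
  have hp1 : 1 < p := by linarith
  have hd : Differentiable ℝ h := hh.differentiable two_ne_zero
  have hd' : Differentiable ℝ (deriv h) :=
    (ContDiff.deriv' (n := 1) hh).differentiable one_ne_zero
  have hf (b : ℝ) : Differentiable ℝ fun x => |x - b| ^ p / p :=
    fun x => (hasDerivAt_abs_sub_rpow_div hp1 b x).differentiableAt
  have hf' (b : ℝ) := hasDerivAt_deriv_abs_sub_rpow_div (x := 0) (b := b) hp1 (Or.inr hp)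
  obtain ⟨-, μ, hμ, -, -, hconvex⟩ := hb 0
  obtain ⟨L, μ', hμ', hμ'L, hsmooth, -⟩ := hb 1
  have hnonpos : deriv (deriv h) 0 ≤ 0 := by
    have := hconvex.deriv2_le (hf 0) hd (hf' 0).differentiableAt (hd' 0)
    rw [(hf' 0).deriv, sub_zero, abs_zero, Real.zero_rpow (by linarith), mul_zero] at this
    exact nonpos_of_mul_nonpos_right this hμ
  have hpos : p - 1 ≤ L * deriv (deriv h) 0 := by
    simpa [(hf' 1).deriv] using
      hsmooth.deriv2_le (hf 1) hd (hf' 1).differentiableAt (hd' 0)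
  linarith [mul_nonpos_of_nonneg_of_nonpos (hμ'.trans_le hμ'L).le hnonpos]

/-- for `1 < q < 2`, `k(x*) = |x*|^q/q` and `f_b(x) = |x - b|^p/p` with
`1/p + 1/q = 1` (so `p > 2`), each `f_b` satisfies `k''(f_b'(x)) · f_b''(x) = 1` (i.e.
`[k''(f_b'(x))]⁻¹ = f_b''(x)`) for all `x ≠ b`, yet there is no single twice continuously
differentiable convex reference function `h : ℝ → ℝ` such that every translate `f_b` is both
`L`-smooth and `μ`-strongly convex relative to `h` for some constants `L ≥ μ > 0`. -/
theorem stmt10 (p q : ℝ) (hq1 : 1 < q) (hq2 : q < 2) (hpq : 1 / p + 1 / q = 1) :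
    (∀ b x : ℝ, x ≠ b →
      deriv (deriv (fun y : ℝ => |y| ^ q / q)) (deriv (fun w : ℝ => |w - b| ^ p / p) x) *
        deriv (deriv (fun w : ℝ => |w - b| ^ p / p)) x = 1) ∧
    ¬ ∃ h : ℝ → ℝ, ContDiff ℝ 2 h ∧ ConvexOn ℝ Set.univ h ∧
        ∀ b : ℝ, ∃ L μ : ℝ, 0 < μ ∧ μ ≤ L ∧
          ConvexOn ℝ Set.univ (fun x => L * h x - |x - b| ^ p / p) ∧
          ConvexOn ℝ Set.univ (fun x => |x - b| ^ p / p - μ * h x) := by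
  have hconj : p.HolderConjugate q :=
    (Real.holderConjugate_iff.2 ⟨hq1, by simpa only [one_div, add_comm] using hpq⟩).symm
  refine ⟨fun b x hx => deriv2_abs_rpow_div_deriv_mul_deriv2_abs_sub_rpow_div hconj hx, ?_⟩
  rintro ⟨h, hh, -, hb⟩
  exact not_forall_isRelSmooth_isRelStronglyConvex_abs_sub_rpow_div
    (hconj.two_lt_of_lt_two hq2) hh hb
end

section
/- (Adaptive step sizes) Let f : ℝ^d → ℝ ∪ {∞} be proper closed convex, differentiable on int(dom f) ≠ ∅ and minimized at x_min, and k : ℝ^d → ℝ ∪ {∞} proper closed convex and differentiable on ∇f(int(dom f)). If x₀ ∈ int(dom f) and the iterates x_i = x_{i−1} − (1/L*_{i−1})∇k(∇f(x_{i−1})) satisfy, for all i > 0: (1) x_i ∈ int(dom f), (2) k(∇f(x_i)) ≤ k(∇f(x_{i−1})), (3) k(∇f(x_i)) − k(0) ≤ L*_{i−1}(f(x_{i−1}) − f(x_i)), then for all i > 0: k(∇f(x_i)) − k(0) ≤ (max_{0 ≤ j ≤ i−1} L*_j / i)·(f(x₀) − f(x_min)). -/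
open Filter Topology RealInnerProductSpace Classical

noncomputable section

/-- adaptive step sizes: for proper closed convex `f` (differentiable on the
nonempty interior of its domain, minimized at `xmin`) and proper closed convex `k`
(differentiable on `∇f(int dom f)`), if the iterates
`x_i = x_{i-1} - (1/L_{i-1})·∇k(∇f(x_{i-1}))` satisfy the three itemized conditions, then
`k(∇f(x_i)) - k(0) ≤ (max_{0 ≤ j ≤ i-1} L_j / i)·(f(x₀) - f(xmin))` for all `i > 0`. -/
theorem stmt16 {d : ℕ} (f k : E d → ℝ) (Sf Sk : Set (E d)) (f' k' : E d → E d)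
    (hfpc : IsProperClosedConvexOn f Sf)
    (hint : (interior Sf).Nonempty)
    (hfdiff : ∀ x ∈ interior Sf, HasGradientAt f (f' x) x)
    (hkpc : IsProperClosedConvexOn k Sk)
    (hkdiff : ∀ y ∈ f' '' interior Sf, HasGradientAt k (k' y) y)
    (xmin : E d) (hxmin : xmin ∈ Sf) (hmin : ∀ x ∈ Sf, f xmin ≤ f x)
    (L : ℕ → ℝ) (hL : ∀ i, 0 < L i)
    (x : ℕ → E d) (hx0 : x 0 ∈ interior Sf)
    (hiter : ∀ i : ℕ, x (i + 1) = x i - (1 / L i) • k' (f' (x i)))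
    (h1 : ∀ i : ℕ, x i ∈ interior Sf)
    (h2 : ∀ i : ℕ, k (f' (x (i + 1))) ≤ k (f' (x i)))
    (h3 : ∀ i : ℕ, k (f' (x (i + 1))) - k 0 ≤ L i * (f (x i) - f (x (i + 1)))) :
    ∀ i : ℕ, ∀ hi : 0 < i,
      k (f' (x i)) - k 0 ≤
        ((Finset.range i).sup' (Finset.nonempty_range_iff.mpr hi.ne') L / (i : ℝ)) *
          (f (x 0) - f xmin) := by
  intro i hi
  set M := (Finset.range i).sup' (Finset.nonempty_range_iff.mpr hi.ne') L with hM
  have hMpos : 0 < M := by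
    obtain ⟨j, hj, hje⟩ := Finset.exists_mem_eq_sup' (Finset.nonempty_range_iff.mpr hi.ne') L
    rw [hM, hje]; exact hL j
  have hxS : ∀ n, x n ∈ Sf := fun n => interior_subset (h1 n)
  have hD : 0 ≤ f (x 0) - f xmin := sub_nonneg.2 (hmin _ (hxS 0))
  have hanti : ∀ m n : ℕ, m ≤ n → k (f' (x n)) ≤ k (f' (x m)) := by
    intro m n hmn
    induction n with
    | zero => simp_all
    | succ p ih =>
      rcases Nat.lt_or_ge m (p+1) with h | h
      · exact (h2 p).trans (ih (Nat.lt_succ_iff.mp h))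
      · have : m = p + 1 := le_antisymm hmn h
        simp [this]
  set c := k (f' (x i)) - k 0 with hc
  rcases le_or_gt c 0 with hcle | hcpos
  · exact hcle.trans (mul_nonneg (div_nonneg hMpos.le (Nat.cast_nonneg i)) hD)
  · -- each decrement is positive
    have hdelta : ∀ j < i, 0 < f (x j) - f (x (j+1)) := by
      intro j hj
      have h1' : c ≤ k (f' (x (j+1))) - k 0 := by
        have := hanti (j+1) i hj
        simpa [hc] using sub_le_sub_right this (k 0)
      have hprod := lt_of_lt_of_le hcpos (h1'.trans (h3 j))
      nlinarith [hL j]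
    have key : (i : ℝ) * c ≤ M * (f (x 0) - f (x i)) := by
      have step : ∀ j ∈ Finset.range i, c ≤ M * (f (x j) - f (x (j+1))) := by
        intro j hj
        have hji := Finset.mem_range.mp hj
        have h1' : c ≤ k (f' (x (j+1))) - k 0 := by
          have := hanti (j+1) i hji
          simpa [hc] using sub_le_sub_right this (k 0)
        refine (h1'.trans (h3 j)).trans ?_
        exact mul_le_mul_of_nonneg_right (Finset.le_sup' L hj) (hdelta j hji).le
      calc (i : ℝ) * c = ∑ j ∈ Finset.range i, c := by
            rw [Finset.sum_const, Finset.card_range, nsmul_eq_mul]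
        _ ≤ ∑ j ∈ Finset.range i, M * (f (x j) - f (x (j+1))) := Finset.sum_le_sum step
        _ = M * ∑ j ∈ Finset.range i, (f (x j) - f (x (j+1))) := by
            rw [Finset.mul_sum]
        _ = M * (f (x 0) - f (x i)) := by
            congr 1
            have := Finset.sum_range_sub' (fun n => f (x n)) i
            simpa using this
    have key2 : (i : ℝ) * c ≤ M * (f (x 0) - f xmin) := by
      refine key.trans (mul_le_mul_of_nonneg_left ?_ hMpos.le)
      have := hmin _ (hxS i)
      linarith
    have hipos : (0 : ℝ) < i := by exact_mod_cast hi
    rw [div_mul_eq_mul_div, le_div_iff₀ hipos]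
    linarith [key2]
end
end

section
/- For k(x*) = ‖x*‖ − log(‖x*‖ + 1) on ℝ^d (Euclidean norm), k is Legendre convex, ∇k(x*) = x*/(‖x*‖+1), and for all x* ≠ 0 the Hessian satisfies ∇²k(x*) = I/(‖x*‖+1) − x* x*ᵀ / ((‖x*‖+1)² ‖x*‖), so that [∇²k(x*)]⁻¹ ⪰ (1 + ‖x*‖)·I. -/
open Filter Topology RealInnerProductSpace Classical

noncomputable section

/-!
Write `k = φ ∘ ‖·‖` with `φ = kRadial`, which is strictly increasing and strictly convex
on `[0, ∞)` with `φ' t = t / (t + 1)`. Strict convexity of `k` comes from strict convexity of `φ`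
when the two points have different norms, and from strict convexity of the Euclidean ball when
they have the same norm. Away from `0` the gradient is the chain rule; at `0` it vanishes because
`0 ≤ φ t ≤ t ^ 2`. The Hessian is `α • 1 + β • P` with `P = y yᵀ`, and `P * P = ‖y‖ ^ 2 • P`, so
such operators multiply like scalars and the inverse `(‖y‖ + 1) • 1 + ((‖y‖ + 1) / ‖y‖) • P` is of
the same form, with a positive semidefinite rank-one part.
-/

open Set InnerProductSpace ContinuousLinearMap

theorem StrictConvexOn.comp_norm {F : Type*} [NormedAddCommGroup F] [NormedSpace ℝ F]
    [StrictConvexSpace ℝ F] {φ : ℝ → ℝ} (hφ : StrictConvexOn ℝ (Ici 0) φ)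
    (hφ_mono : StrictMonoOn φ (Ici 0)) : StrictConvexOn ℝ univ (fun x : F => φ ‖x‖) := by
  refine ⟨convex_univ, fun x _ y _ hxy a b ha hb hab => ?_⟩
  have hx : ‖x‖ ∈ Ici (0 : ℝ) := norm_nonneg x
  have hy : ‖y‖ ∈ Ici (0 : ℝ) := norm_nonneg y
  have hz : ‖a • x + b • y‖ ∈ Ici (0 : ℝ) := norm_nonneg _
  rcases eq_or_ne ‖x‖ ‖y‖ with hnorm | hnorm
  · calc φ ‖a • x + b • y‖ < φ ‖x‖ :=
          hφ_mono hz hx (norm_combo_lt_of_ne le_rfl hnorm.ge hxy ha hb hab)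
      _ = a • φ ‖x‖ + b • φ ‖y‖ := by rw [← hnorm, ← add_smul, hab, one_smul]
  · calc φ ‖a • x + b • y‖ ≤ φ (a • ‖x‖ + b • ‖y‖) :=
          hφ_mono.monotoneOn hz (hφ.1 hx hy ha.le hb.le hab)
            (convexOn_univ_norm.2 trivial trivial ha.le hb.le hab)
      _ < a • φ ‖x‖ + b • φ ‖y‖ := hφ.2 hx hy hnorm ha hb hab

theorem smul_one_add_smul_mul_eq_one {R A : Type*} [CommRing R] [Ring A] [Algebra R A]
    {P : A} {r α β γ δ : R} (hP : P * P = r • P) (h1 : α * γ = 1)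
    (h2 : α * δ + β * γ + β * δ * r = 0) : (α • 1 + β • P) * (γ • 1 + δ • P) = 1 :=
  calc (α • 1 + β • P) * (γ • 1 + δ • P)
      = (α * γ) • (1 : A) + (α * δ + β * γ + β * δ * r) • P := by
        simp only [add_mul, mul_add, smul_mul_smul_comm, one_mul, mul_one, hP, smul_smul]
        module
    _ = 1 := by rw [h1, h2, one_smul, zero_smul, add_zero]

section InnerProductSpace

variable {F : Type*} [NormedAddCommGroup F] [InnerProductSpace ℝ F]

theorem hasFDerivAt_norm {y : F} (hy : y ≠ 0) :
    HasFDerivAt (fun w : F => ‖w‖) (‖y‖⁻¹ • innerSL ℝ y) y := by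
  have h := ((hasFDerivAt_id y).norm_sq).sqrt (by positivity)
  simp only [id_eq, Real.sqrt_sq (norm_nonneg _)] at h
  refine h.congr_fderiv ?_
  ext v
  simp only [one_div, mul_inv_rev, comp_id, smul_apply, coe_innerSL_apply, nsmul_eq_mul,
    Nat.cast_ofNat, smul_eq_mul]
  ring

theorem rankOne_mul_self (y : F) : rankOne ℝ y y * rankOne ℝ y y = ‖y‖ ^ 2 • rankOne ℝ y y := by
  rw [mul_def, rankOne_comp_rankOne, real_inner_self_eq_norm_sq]

theorem le_inner_smul_one_add_smul_rankOne_apply (y v : F) {γ δ : ℝ} (hδ : 0 ≤ δ) :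
    γ * ‖v‖ ^ 2 ≤ ⟪v, (γ • 1 + δ • rankOne ℝ y y) v⟫ := by
  simp only [add_apply, smul_apply, one_apply_eq_self, rankOne_apply, inner_add_right,
    real_inner_smul_right, real_inner_self_eq_norm_sq, real_inner_comm v y]
  nlinarith [mul_nonneg hδ (mul_self_nonneg ⟪y, v⟫)]

theorem hasFDerivAt_inv_norm_add_one_smul {y : F} (hy : y ≠ 0) :
    HasFDerivAt (fun w : F => (‖w‖ + 1)⁻¹ • w)
      ((‖y‖ + 1)⁻¹ • 1 - ((‖y‖ + 1) ^ 2 * ‖y‖)⁻¹ • rankOne ℝ y y) y := by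
  have hinv : HasFDerivAt (fun w : F => (‖w‖ + 1)⁻¹)
      (-((‖y‖ + 1) ^ 2)⁻¹ • ‖y‖⁻¹ • innerSL ℝ y) y :=
    (hasDerivAt_inv (by positivity)).comp_hasFDerivAt y ((hasFDerivAt_norm hy).add_const 1)
  refine (hinv.smul (hasFDerivAt_id y)).congr_fderiv ?_
  ext v
  simp only [neg_smul, id_eq, add_apply, smul_apply, ContinuousLinearMap.id_apply,
    smulRight_apply, neg_apply, coe_innerSL_apply, smul_eq_mul, mul_inv_rev, sub_apply,
    one_apply_eq_self, rankOne_apply]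
  module

end InnerProductSpace

def kRadial (t : ℝ) : ℝ := t - Real.log (t + 1)

theorem hasDerivAt_kRadial {t : ℝ} (ht : t + 1 ≠ 0) : HasDerivAt kRadial (t / (t + 1)) t := by
  have h : HasDerivAt (fun s => s - Real.log (s + 1)) (1 - 1 / (t + 1)) t :=
    (hasDerivAt_id t).sub (((hasDerivAt_id t).add_const 1).log ht)
  exact h.congr_deriv (by field_simp; ring)

theorem continuousOn_kRadial : ContinuousOn kRadial (Ici 0) := fun t ht =>
  (hasDerivAt_kRadial (by linarith [mem_Ici.1 ht])).continuousAt.continuousWithinAt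

theorem strictMonoOn_kRadial : StrictMonoOn kRadial (Ici 0) := by
  refine strictMonoOn_of_deriv_pos (convex_Ici 0) continuousOn_kRadial fun t ht => ?_
  rw [interior_Ici, mem_Ioi] at ht
  rw [(hasDerivAt_kRadial (by linarith)).deriv]
  positivity

theorem strictConvexOn_kRadial : StrictConvexOn ℝ (Ici 0) kRadial := by
  refine StrictMonoOn.strictConvexOn_of_deriv (convex_Ici 0) continuousOn_kRadial ?_
  rw [interior_Ici]
  intro s hs t ht hst
  rw [mem_Ioi] at hs ht
  rw [(hasDerivAt_kRadial (by linarith)).deriv, (hasDerivAt_kRadial (by linarith)).deriv,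
    div_lt_div_iff₀ (by linarith) (by linarith)]
  linarith

theorem abs_kRadial_le_sq {t : ℝ} (ht : 0 ≤ t) : |kRadial t| ≤ t ^ 2 := by
  have hpos : 0 < t + 1 := by linarith
  have hupper : Real.log (t + 1) ≤ t := by linarith [Real.log_le_sub_one_of_pos hpos]
  have hlower : t / (t + 1) ≤ Real.log (t + 1) := by
    convert Real.one_sub_inv_le_log_of_pos hpos using 1
    field_simp
    ring
  have hquad : t - t ^ 2 ≤ t / (t + 1) := by
    rw [le_div_iff₀ hpos]
    nlinarith [pow_nonneg ht 3]
  rw [abs_of_nonneg (by unfold kRadial; linarith)]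
  unfold kRadial
  linarith

theorem hasGradientAt_kRadial_norm {F : Type*} [NormedAddCommGroup F] [InnerProductSpace ℝ F]
    [CompleteSpace F] (y : F) : HasGradientAt (fun w : F => kRadial ‖w‖) ((‖y‖ + 1)⁻¹ • y) y := by
  rw [hasGradientAt_iff_hasFDerivAt]
  rcases eq_or_ne y 0 with rfl | hy
  · rw [smul_zero, map_zero]
    refine Asymptotics.IsBigO.hasFDerivAt (n := 2) ?_ one_lt_two
    refine Asymptotics.IsBigO.of_bound 1 (Eventually.of_forall fun w => ?_)
    rw [sub_zero, Real.norm_eq_abs, norm_pow, norm_norm, one_mul]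
    exact abs_kRadial_le_sq (norm_nonneg w)
  · refine ((hasDerivAt_kRadial (by positivity)).comp_hasFDerivAt y
      (hasFDerivAt_norm hy)).congr_fderiv ?_
    ext v
    simp only [smul_apply, coe_innerSL_apply, smul_eq_mul, map_smul, toDual_apply_apply]
    field_simp

/-- for `k(x*) = ‖x*‖ - log(‖x*‖ + 1)` on `ℝ^d`: `k` is Legendre convex (it is
differentiable everywhere, so essential smoothness amounts to the gradient formula, and it is
strictly convex), its gradient is `x*/(‖x*‖+1)`, and for every `x* ≠ 0` the Hessian `H`
(the derivative of the gradient map) is given by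
`H = I/(‖x*‖+1) - x* x*ᵀ/((‖x*‖+1)²‖x*‖)`, is invertible, and its inverse satisfies
`H⁻¹ ⪰ (1 + ‖x*‖)·I`. -/
theorem stmt17 {d : ℕ} :
    StrictConvexOn ℝ Set.univ (fun y : E d => ‖y‖ - Real.log (‖y‖ + 1)) ∧
    (∀ y : E d,
      HasGradientAt (fun w : E d => ‖w‖ - Real.log (‖w‖ + 1)) ((‖y‖ + 1)⁻¹ • y) y) ∧
    ∀ y : E d, y ≠ 0 → ∃ H Hinv : E d →L[ℝ] E d,
      HasFDerivAt (fun w : E d => (‖w‖ + 1)⁻¹ • w) H y ∧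
      (∀ v : E d, H v = (‖y‖ + 1)⁻¹ • v - (((‖y‖ + 1) ^ 2 * ‖y‖)⁻¹ * ⟪y, v⟫) • y) ∧
      H.comp Hinv = ContinuousLinearMap.id ℝ (E d) ∧
      Hinv.comp H = ContinuousLinearMap.id ℝ (E d) ∧
      ∀ v : E d, (1 + ‖y‖) * ‖v‖ ^ 2 ≤ ⟪v, Hinv v⟫ := by
  refine ⟨strictConvexOn_kRadial.comp_norm strictMonoOn_kRadial, hasGradientAt_kRadial_norm,
    fun y hy => ?_⟩
  have hP := rankOne_mul_self y
  have h1 : (‖y‖ + 1)⁻¹ * (‖y‖ + 1) = 1 := inv_mul_cancel₀ (by positivity)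
  have h2 : (‖y‖ + 1)⁻¹ * ((‖y‖ + 1) / ‖y‖) + -((‖y‖ + 1) ^ 2 * ‖y‖)⁻¹ * (‖y‖ + 1)
      + -((‖y‖ + 1) ^ 2 * ‖y‖)⁻¹ * ((‖y‖ + 1) / ‖y‖) * ‖y‖ ^ 2 = 0 := by
    field_simp
    ring
  have hH : (‖y‖ + 1)⁻¹ • 1 - ((‖y‖ + 1) ^ 2 * ‖y‖)⁻¹ • rankOne ℝ y y
      = (‖y‖ + 1)⁻¹ • 1 + (-((‖y‖ + 1) ^ 2 * ‖y‖)⁻¹) • rankOne ℝ y y := by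
    rw [neg_smul, sub_eq_add_neg]
  refine ⟨_, (‖y‖ + 1) • 1 + ((‖y‖ + 1) / ‖y‖) • rankOne ℝ y y,
    hasFDerivAt_inv_norm_add_one_smul hy, fun v => ?_, ?_, ?_, fun v => ?_⟩
  · simp only [mul_inv_rev, mul_smul, sub_apply, smul_apply, one_apply_eq_self, rankOne_apply]
  · rw [hH]
    exact smul_one_add_smul_mul_eq_one hP h1 h2
  · rw [hH]
    exact smul_one_add_smul_mul_eq_one hP (by rw [mul_comm, h1]) (by linear_combination h2)
  · rw [add_comm 1 ‖y‖]
    exact le_inner_smul_one_add_smul_rankOne_apply y v (by positivity)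
end
end
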